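/- arXiv:1108.3118 — 3 statements merged into one kernel-verified Lean document; each statement's English description precedes it below -/
import Mathlib

section
/- Let N ≥ 1, p > 1, and let ω₁, ω₂ : ℝ^N → ℝ be smooth positive functions with ∇ω₁(x) · x ≤ 0 for all x with |x| sufficiently large. Suppose there exists t with 0 < t < 1/2 such that I_L(R) → 0 as R → ∞, where I_L(R) = R^{-2(2t+p−1)/(p−1)} ∫_{R<|x|<2R} (ω₁^{p+2t−1}/ω₂^{2t})^{1/(p−1)} dx. Then there is no positive stable super-solution of the equation −div(ω₁ ∇u) = ω₂ u^p in ℝ^N. -/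
open MeasureTheory Filter Real
open scoped RealInnerProductSpace

noncomputable def vdiv {N : ℕ} (V : EuclideanSpace ℝ (Fin N) → EuclideanSpace ℝ (Fin N))
    (x : EuclideanSpace ℝ (Fin N)) : ℝ :=
  LinearMap.trace ℝ (EuclideanSpace ℝ (Fin N)) (fderiv ℝ V x).toLinearMap

def annulus (N : ℕ) (R : ℝ) : Set (EuclideanSpace ℝ (Fin N)) :=
  {x | R < ‖x‖ ∧ ‖x‖ < 2 * R}

section helpers

variable {N : ℕ}

local notation "E" => EuclideanSpace ℝ (Fin N)

lemma toDualSymm_smul (c : ℝ) (l : StrongDual ℝ (EuclideanSpace ℝ (Fin N))) :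
    (InnerProductSpace.toDual ℝ E).symm (c • l) = c • (InnerProductSpace.toDual ℝ E).symm l := by
  rw [map_smulₛₗ]
  simp

lemma inner_gradient (f : E → ℝ) (x y : E) : ⟪gradient f x, y⟫ = fderiv ℝ f x y :=
  InnerProductSpace.toDual_symm_apply

lemma tr_smulRight (l : EuclideanSpace ℝ (Fin N) →L[ℝ] ℝ) (v : E) :
    LinearMap.trace ℝ E (l.smulRight v).toLinearMap = l v := by
  have h : (l.smulRight v).toLinearMap
      = dualTensorHom ℝ E E ((l : E →ₗ[ℝ] ℝ) ⊗ₜ[ℝ] v) := by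
    ext m
    simp [dualTensorHom_apply]
  rw [h, LinearMap.trace_eq_contract_apply, contractLeft_apply]
  rfl

lemma vdiv_smul {φ : E → ℝ} {W : E → E} {x : E}
    (hφ : DifferentiableAt ℝ φ x) (hW : DifferentiableAt ℝ W x) :
    vdiv (fun y => φ y • W y) x = ⟪gradient φ x, W x⟫ + φ x * vdiv W x := by
  unfold vdiv
  rw [fderiv_fun_smul hφ hW]
  rw [ContinuousLinearMap.coe_add, map_add, ContinuousLinearMap.coe_smul,
    LinearMap.map_smul, tr_smulRight, inner_gradient]
  simp only [smul_eq_mul]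
  ring

lemma gradient_mul {f g : E → ℝ} {x : E}
    (hf : DifferentiableAt ℝ f x) (hg : DifferentiableAt ℝ g x) :
    gradient (fun y => f y * g y) x = f x • gradient g x + g x • gradient f x := by
  unfold gradient
  rw [fderiv_fun_mul hf hg, map_add, toDualSymm_smul, toDualSymm_smul]

lemma gradient_rpow {u : E → ℝ} {x : E} (hu : DifferentiableAt ℝ u x) (hx : u x ≠ 0) (c : ℝ) :
    gradient (fun y => u y ^ c) x = (c * u x ^ (c - 1)) • gradient u x := by
  have h := (Real.hasDerivAt_rpow_const (p := c) (Or.inl hx)).comp_hasFDerivAt x hu.hasFDerivAt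
  have h' : HasFDerivAt (fun y => u y ^ c) ((c * u x ^ (c - 1)) • fderiv ℝ u x) x := h
  unfold gradient
  rw [h'.fderiv, toDualSymm_smul]

lemma gradient_npow {f : E → ℝ} {x : E} (hf : DifferentiableAt ℝ f x) (k : ℕ) :
    gradient (fun y => f y ^ k) x = ((k : ℝ) * f x ^ (k - 1)) • gradient f x := by
  have h := (hasDerivAt_pow k (f x)).comp_hasFDerivAt x hf.hasFDerivAt
  have h' : HasFDerivAt (fun y => f y ^ k) (((k : ℝ) * f x ^ (k - 1)) • fderiv ℝ f x) x := h
  unfold gradient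
  rw [h'.fderiv, toDualSymm_smul]

lemma contDiff_gradient {f : E → ℝ} {n : ℕ} (hf : ContDiff ℝ (n + 1) f) :
    ContDiff ℝ n (gradient f) := by
  have h1 : ContDiff ℝ n (fderiv ℝ f) := hf.fderiv_right (by norm_cast)
  have h2 : ContDiff ℝ n fun l : EuclideanSpace ℝ (Fin N) →L[ℝ] ℝ =>
      (InnerProductSpace.toDual ℝ E).symm l := by
    apply IsBoundedLinearMap.contDiff
    refine ⟨⟨fun a b => map_add _ a b, toDualSymm_smul⟩, 1, by simp⟩
  exact h2.comp h1

lemma continuous_gradient {f : E → ℝ} (hf : ContDiff ℝ 2 f) : Continuous (gradient f) :=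
  (contDiff_gradient (n := 1) (by exact_mod_cast hf)).continuous

lemma continuous_vdiv {W : E → E} (hW : ContDiff ℝ 1 W) : Continuous (vdiv W) := by
  have h1 : Continuous (fderiv ℝ W) := hW.continuous_fderiv one_ne_zero
  have h2 : Continuous fun L : E →L[ℝ] E => LinearMap.trace ℝ E L.toLinearMap := by
    let T : (E →L[ℝ] E) →ₗ[ℝ] ℝ :=
      (LinearMap.trace ℝ E).comp (ContinuousLinearMap.coeLM ℝ)
    exact (LinearMap.continuous_of_finiteDimensional T)
  exact h2.comp h1

lemma gradient_comp_const_smul {b : E → ℝ} {x : E} {c : ℝ}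
    (hb : DifferentiableAt ℝ b (c • x)) :
    gradient (fun y => b (c • y)) x = c • gradient b (c • x) := by
  have hL : HasFDerivAt (fun y : E => c • y) (c • ContinuousLinearMap.id ℝ E) x := by
    have := (c • ContinuousLinearMap.id ℝ E).hasFDerivAt (x := x)
    exact this
  have h := hb.hasFDerivAt.comp x hL
  have h' : HasFDerivAt (fun y => b (c • y))
      ((fderiv ℝ b (c • x)).comp (c • ContinuousLinearMap.id ℝ E)) x := h
  apply ext_inner_right ℝ
  intro v
  rw [inner_gradient, h'.fderiv]
  rw [real_inner_smul_left, inner_gradient]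
  simp

lemma gradient_eq_zero_of_isLocalMax {f : E → ℝ} {x : E} (h : IsLocalMax f x) :
    gradient f x = 0 := by
  unfold gradient
  rw [h.fderiv_eq_zero, map_zero]

lemma gradient_eq_zero_of_isLocalMin {f : E → ℝ} {x : E} (h : IsLocalMin f x) :
    gradient f x = 0 := by
  unfold gradient
  rw [h.fderiv_eq_zero, map_zero]

lemma support_gradient_subset {f : E → ℝ} :
    Function.support (gradient f) ⊆ tsupport f := by
  intro x hx
  by_contra hxx
  apply hx
  have hz : fderiv ℝ f x = 0 := by
    by_contra h
    exact hxx (support_fderiv_subset (𝕜 := ℝ) (Function.mem_support.mpr h))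
  show gradient f x = 0
  unfold gradient
  rw [hz, map_zero]

lemma hcs_of_support_subset {F' : Type*} [NormedAddCommGroup F'] {f : E → F'} {r : ℝ}
    (h : Function.support f ⊆ Metric.closedBall 0 r) : HasCompactSupport f :=
  IsCompact.of_isClosed_subset (isCompact_closedBall (0 : E) r) isClosed_closure
    (closure_minimal h Metric.isClosed_closedBall)

lemma trace_pi {k : ℕ} (M : (Fin k → ℝ) →ₗ[ℝ] (Fin k → ℝ)) :
    LinearMap.trace ℝ (Fin k → ℝ) M = ∑ i, M (Pi.single i 1) i := by
  rw [LinearMap.trace_eq_matrix_trace ℝ (Pi.basisFun ℝ (Fin k))]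
  simp [Matrix.trace, Matrix.diag, LinearMap.toMatrix_apply]

end helpers

lemma integral_vdiv_eq_zero {n : ℕ}
    (W : EuclideanSpace ℝ (Fin (n + 1)) → EuclideanSpace ℝ (Fin (n + 1)))
    (hW : ContDiff ℝ 1 W) (hsupp : HasCompactSupport W) :
    ∫ x, vdiv W x = 0 := by
  classical
  set c := EuclideanSpace.equiv (Fin (n + 1)) ℝ with hc
  set g : (Fin (n + 1) → ℝ) → (Fin (n + 1) → ℝ) := fun y => c (W (c.symm y)) with hgdef
  have hgc : g = (⇑c ∘ W) ∘ ⇑c.symm := rfl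
  have hg : ContDiff ℝ 1 g := by
    exact (c.toContinuousLinearMap.contDiff.comp hW).comp c.symm.toContinuousLinearMap.contDiff
  have hgsupp : HasCompactSupport g := by
    rw [hgc]
    exact (hsupp.comp_left (by simp)).comp_homeomorph c.symm.toHomeomorph
  obtain ⟨r, hr⟩ := hgsupp.isBounded.subset_ball 0
  set L : ℝ := max r 1 with hL
  have hrL : r ≤ L := le_max_left _ _
  set a : Fin (n + 1) → ℝ := fun _ => -L with ha
  set b : Fin (n + 1) → ℝ := fun _ => L with hb
  have hle : a ≤ b := by
    intro i
    simp only [ha, hb]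
    have : (1 : ℝ) ≤ L := le_max_right _ _
    linarith
  have hg0 : ∀ y : Fin (n + 1) → ℝ, r ≤ ‖y‖ → g y = 0 := by
    intro y hy
    by_contra h
    have : y ∈ tsupport g := subset_tsupport g h
    have := hr this
    rw [Metric.mem_ball, dist_zero_right] at this
    linarith
  set D : (Fin (n + 1) → ℝ) → ℝ := fun y => ∑ i, fderiv ℝ g y (Pi.single i 1) i with hD
  have hDcont : Continuous D := by
    apply continuous_finset_sum
    intro i _
    exact (continuous_apply i).comp ((hg.continuous_fderiv one_ne_zero).clm_apply continuous_const)
  have hD0 : ∀ y ∉ Set.Icc a b, D y = 0 := by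
    intro y hy
    have : ∃ i, ¬(a i ≤ y i ∧ y i ≤ b i) := by
      by_contra h
      push_neg at h
      exact hy ⟨fun i => (h i).1, fun i => (h i).2⟩
    obtain ⟨i, hi⟩ := this
    have hyi : L < |y i| := by
      simp only [ha, hb] at hi
      rcases abs_cases (y i) with ⟨h1, h2⟩ | ⟨h1, h2⟩ <;> [skip; skip] <;> by_contra h3 <;>
        push_neg at h3 <;> apply hi <;> constructor <;> linarith [abs_nonneg (y i)]
    have hnorm : r ≤ ‖y‖ := by
      calc r ≤ L := hrL
      _ ≤ |y i| := le_of_lt hyi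
      _ ≤ ‖y‖ := by simpa using norm_le_pi_norm y i
    have hfz : fderiv ℝ g y = 0 := by
      have hyn : y ∉ tsupport g := by
        intro hmem
        have := hr hmem
        rw [Metric.mem_ball, dist_zero_right] at this
        linarith
      have := support_fderiv_subset (𝕜 := ℝ) (f := g)
      by_contra h
      exact hyn (this h)
    simp [hD, hfz]
  have me := EuclideanSpace.volume_preserving_symm_measurableEquiv_toLp (Fin (n + 1))
  have step1 : ∫ x, vdiv W x
      = ∫ y : Fin (n + 1) → ℝ, vdiv W ((MeasurableEquiv.toLp 2 (Fin (n + 1) → ℝ)) y) := by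
    exact ((MeasurePreserving.symm _ me).integral_comp (MeasurableEquiv.measurableEmbedding _) _).symm
  have hsymm_eq : ∀ y, (MeasurableEquiv.toLp 2 (Fin (n + 1) → ℝ)) y = c.symm y := by
    intro y; rfl
  have step2 : ∀ y, vdiv W (c.symm y) = D y := by
    intro y
    have h1 : HasFDerivAt (⇑c.symm) (c.symm : (Fin (n+1) → ℝ) →L[ℝ] EuclideanSpace ℝ (Fin (n+1))) y :=
      c.symm.toContinuousLinearMap.hasFDerivAt
    have h2 : HasFDerivAt W (fderiv ℝ W (c.symm y)) (c.symm y) :=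
      ((hW.differentiable one_ne_zero) (c.symm y)).hasFDerivAt
    have h3 : HasFDerivAt (⇑c) (c : EuclideanSpace ℝ (Fin (n+1)) →L[ℝ] (Fin (n+1) → ℝ)) (W (c.symm y)) :=
      c.toContinuousLinearMap.hasFDerivAt
    have hgf : HasFDerivAt g
        ((c : EuclideanSpace ℝ (Fin (n+1)) →L[ℝ] (Fin (n+1) → ℝ)).comp
          ((fderiv ℝ W (c.symm y)).comp
            (c.symm : (Fin (n+1) → ℝ) →L[ℝ] EuclideanSpace ℝ (Fin (n+1))))) y := by
      exact h3.comp y (h2.comp y h1)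
    have hfd := hgf.fderiv
    have htr : LinearMap.trace ℝ (Fin (n+1) → ℝ) (fderiv ℝ g y).toLinearMap
        = LinearMap.trace ℝ (EuclideanSpace ℝ (Fin (n+1))) (fderiv ℝ W (c.symm y)).toLinearMap := by
      rw [hfd]
      have hconj : ((c : EuclideanSpace ℝ (Fin (n+1)) →L[ℝ] (Fin (n+1) → ℝ)).comp
          ((fderiv ℝ W (c.symm y)).comp
            (c.symm : (Fin (n+1) → ℝ) →L[ℝ] EuclideanSpace ℝ (Fin (n+1))))).toLinearMap
          = c.toLinearEquiv.conj (fderiv ℝ W (c.symm y)).toLinearMap := by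
        ext m
        simp only [LinearEquiv.conj_apply, ContinuousLinearMap.coe_comp, LinearMap.coe_comp,
          Function.comp_apply, ContinuousLinearEquiv.coe_toLinearEquiv,
          ContinuousLinearEquiv.coe_coe, ContinuousLinearMap.coe_coe]
        rfl
      rw [hconj, LinearMap.trace_conj']
    unfold vdiv
    rw [← htr, trace_pi]
    rfl
  have step3 : (∫ y : Fin (n + 1) → ℝ, vdiv W (c.symm y)) = ∫ y, D y := by
    congr 1
    funext y
    exact step2 y
  have step4 : (∫ y, D y) = ∫ y in Set.Icc a b, D y :=
    (setIntegral_eq_integral_of_forall_compl_eq_zero hD0).symm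
  have hHi : IntegrableOn D (Set.Icc a b) volume :=
    hDcont.continuousOn.integrableOn_compact isCompact_Icc
  have step5 := integral_divergence_of_hasFDerivAt_off_countable a b hle g
    (fun y => fderiv ℝ g y) ∅ Set.countable_empty (hg.continuous.continuousOn)
    (fun x _ => ((hg.differentiable one_ne_zero) x).hasFDerivAt) hHi
  have faces0 : ∀ (i : Fin (n+1)) (v : ℝ), |v| = L →
      ∀ x : Fin n → ℝ, g (Fin.insertNth (α := fun _ : Fin (n+1) => ℝ) i v x) i = 0 := by
    intro i v hv x
    set z : Fin (n+1) → ℝ := Fin.insertNth (α := fun _ : Fin (n+1) => ℝ) i v x with hz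
    have : r ≤ ‖z‖ := by
      have h1 : |z i| ≤ ‖z‖ := by
        simpa using norm_le_pi_norm z i
      have h2 : z i = v := by simp [hz]
      rw [h2, hv] at h1
      linarith
    rw [hg0 _ this]
    rfl
  have step6 : (∫ y in Set.Icc a b, D y) = 0 := by
    have h7 : (∫ y in Set.Icc a b, D y)
        = ∫ x in Set.Icc a b, ∑ i, fderiv ℝ g x (Pi.single i 1) i := rfl
    rw [h7, step5]
    apply Finset.sum_eq_zero
    intro i _
    have hf : (∫ x : Fin n → ℝ in Set.Icc (a ∘ i.succAbove) (b ∘ i.succAbove),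
        g (i.insertNth (b i) x) i) = 0 := by
      apply integral_eq_zero_of_ae
      filter_upwards with x
      exact faces0 i (b i) (by
        have hLpos : (0:ℝ) < L := lt_of_lt_of_le one_pos (le_max_right r 1)
        simp [hb, abs_of_pos hLpos]) x
    have hbk : (∫ x : Fin n → ℝ in Set.Icc (a ∘ i.succAbove) (b ∘ i.succAbove),
        g (i.insertNth (a i) x) i) = 0 := by
      apply integral_eq_zero_of_ae
      filter_upwards with x
      exact faces0 i (a i) (by
        have hLpos : (0:ℝ) < L := lt_of_lt_of_le one_pos (le_max_right r 1)
        simp [ha, abs_of_pos hLpos]) x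
    rw [hf, hbk, sub_zero]
  calc ∫ x, vdiv W x = ∫ y : Fin (n + 1) → ℝ, vdiv W (c.symm y) := step1
  _ = ∫ y, D y := step3
  _ = ∫ y in Set.Icc a b, D y := step4
  _ = 0 := step6

lemma holder_bochner {α : Type*} [MeasureSpace α] {f g h : α → ℝ}
    (hf : Integrable f) (hg : Integrable g) (hh : AEStronglyMeasurable h volume)
    (hf0 : ∀ x, 0 ≤ f x) (hg0 : ∀ x, 0 ≤ g x)
    {θ₁ θ₂ : ℝ} (h1 : 0 ≤ θ₁) (h2 : 0 ≤ θ₂) (hsum : θ₁ + θ₂ = 1)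
    (heq : ∀ x, h x = f x ^ θ₁ * g x ^ θ₂) :
    ∫ x, h x ≤ (∫ x, f x) ^ θ₁ * (∫ x, g x) ^ θ₂ := by
  have h0 : ∀ x, 0 ≤ h x := by
    intro x
    rw [heq x]
    exact mul_nonneg (Real.rpow_nonneg (hf0 x) _) (Real.rpow_nonneg (hg0 x) _)
  have hfm : AEMeasurable (fun x => ENNReal.ofReal (f x)) volume :=
    ENNReal.measurable_ofReal.comp_aemeasurable hf.aestronglyMeasurable.aemeasurable
  have hgm : AEMeasurable (fun x => ENNReal.ofReal (g x)) volume :=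
    ENNReal.measurable_ofReal.comp_aemeasurable hg.aestronglyMeasurable.aemeasurable
  have key : ∫⁻ x, ENNReal.ofReal (h x)
      ≤ (∫⁻ x, ENNReal.ofReal (f x)) ^ θ₁ * (∫⁻ x, ENNReal.ofReal (g x)) ^ θ₂ := by
    have hcongr : ∀ x, ENNReal.ofReal (h x)
        = ENNReal.ofReal (f x) ^ θ₁ * ENNReal.ofReal (g x) ^ θ₂ := by
      intro x
      rw [heq x, ENNReal.ofReal_mul (Real.rpow_nonneg (hf0 x) _),
        ENNReal.ofReal_rpow_of_nonneg (hf0 x) h1, ENNReal.ofReal_rpow_of_nonneg (hg0 x) h2]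
    calc ∫⁻ x, ENNReal.ofReal (h x)
        = ∫⁻ x, ENNReal.ofReal (f x) ^ θ₁ * ENNReal.ofReal (g x) ^ θ₂ := by
          exact lintegral_congr fun x => hcongr x
      _ ≤ _ := ENNReal.lintegral_mul_norm_pow_le hfm hgm h1 h2 hsum
  have hffin : (∫⁻ x, ENNReal.ofReal (f x)) < ⊤ := by
    have := hf.hasFiniteIntegral
    rw [HasFiniteIntegral] at this
    refine lt_of_le_of_lt (lintegral_mono fun x => ?_) this
    rw [← ofReal_norm]
    exact ENNReal.ofReal_le_ofReal (le_abs_self _)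
  have hgfin : (∫⁻ x, ENNReal.ofReal (g x)) < ⊤ := by
    have := hg.hasFiniteIntegral
    rw [HasFiniteIntegral] at this
    refine lt_of_le_of_lt (lintegral_mono fun x => ?_) this
    rw [← ofReal_norm]
    exact ENNReal.ofReal_le_ofReal (le_abs_self _)
  have hrhsfin : (∫⁻ x, ENNReal.ofReal (f x)) ^ θ₁ * (∫⁻ x, ENNReal.ofReal (g x)) ^ θ₂ ≠ ⊤ :=
    ENNReal.mul_ne_top (ENNReal.rpow_ne_top_of_nonneg h1 hffin.ne)
      (ENNReal.rpow_ne_top_of_nonneg h2 hgfin.ne)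
  have e1 : ∫ x, h x = (∫⁻ x, ENNReal.ofReal (h x)).toReal :=
    integral_eq_lintegral_of_nonneg_ae (Filter.Eventually.of_forall h0) hh
  have e2 : ∫ x, f x = (∫⁻ x, ENNReal.ofReal (f x)).toReal :=
    integral_eq_lintegral_of_nonneg_ae (Filter.Eventually.of_forall hf0) hf.aestronglyMeasurable
  have e3 : ∫ x, g x = (∫⁻ x, ENNReal.ofReal (g x)).toReal :=
    integral_eq_lintegral_of_nonneg_ae (Filter.Eventually.of_forall hg0) hg.aestronglyMeasurable
  rw [e1, e2, e3]
  calc (∫⁻ x, ENNReal.ofReal (h x)).toReal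
      ≤ ((∫⁻ x, ENNReal.ofReal (f x)) ^ θ₁ * (∫⁻ x, ENNReal.ofReal (g x)) ^ θ₂).toReal :=
        ENNReal.toReal_mono hrhsfin key
    _ = (∫⁻ x, ENNReal.ofReal (f x)).toReal ^ θ₁ * (∫⁻ x, ENNReal.ofReal (g x)).toReal ^ θ₂ := by
        rw [ENNReal.toReal_mul, ENNReal.toReal_rpow, ENNReal.toReal_rpow]

lemma key_identity {p t : ℝ} (hp : 1 < p) (ht1 : 0 < t) (k : ℕ)
    {O₁ O₂ U H Q : ℝ} (hO₁ : 0 < O₁) (hO₂ : 0 < O₂) (hU : 0 < U) (hH : 0 < H) (hQ : 0 < Q) :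
    O₁ * U ^ (2*t) * H ^ k * Q ^ 2
    = (O₂ * U ^ (p + 2*t - 1) * H ^ (k+2)) ^ ((2*t)/(p + 2*t - 1))
    * ((O₁ ^ (p+2*t-1) / O₂ ^ (2*t)) ^ (1/(p-1))
      * (H ^ (((k:ℝ)+2)*((p-1)/(p+2*t-1)) - 2) * Q ^ 2) ^ ((p+2*t-1)/(p-1)))
        ^ ((p-1)/(p+2*t-1)) := by
  have hq : 0 < p + 2*t - 1 := by linarith
  have hp1 : 0 < p - 1 := by linarith
  have hL : 0 < O₁ * U ^ (2*t) * H ^ k * Q ^ 2 := by positivity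
  have hR : 0 < (O₂ * U ^ (p + 2*t - 1) * H ^ (k+2)) ^ ((2*t)/(p + 2*t - 1))
      * ((O₁ ^ (p+2*t-1) / O₂ ^ (2*t)) ^ (1/(p-1))
        * (H ^ (((k:ℝ)+2)*((p-1)/(p+2*t-1)) - 2) * Q ^ 2) ^ ((p+2*t-1)/(p-1)))
          ^ ((p-1)/(p+2*t-1)) := by positivity
  have hlog : Real.log (O₁ * U ^ (2*t) * H ^ k * Q ^ 2)
      = Real.log ((O₂ * U ^ (p + 2*t - 1) * H ^ (k+2)) ^ ((2*t)/(p + 2*t - 1))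
    * ((O₁ ^ (p+2*t-1) / O₂ ^ (2*t)) ^ (1/(p-1))
      * (H ^ (((k:ℝ)+2)*((p-1)/(p+2*t-1)) - 2) * Q ^ 2) ^ ((p+2*t-1)/(p-1)))
        ^ ((p-1)/(p+2*t-1))) := by
    simp (disch := positivity) only [Real.log_mul, Real.log_rpow, Real.log_div, Real.log_pow]
    field_simp
    push_cast
    ring
  exact Real.log_injOn_pos (Set.mem_Ioi.mpr hL) (Set.mem_Ioi.mpr hR) hlog

lemma amgm_bound {s : ℝ} (hs : 0 < s) (k : ℕ) (m : ℕ)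
    {U H P Q ip O tt : ℝ} (hU : 0 < U) (hH : 0 ≤ H) (hP : 0 ≤ P) (hQ : 0 ≤ Q) (hO : 0 ≤ O)
    (hip : ip ≤ Q * P) (htt : tt = 1 - s) :
    O * (U ^ (-s) * m * H ^ (k+1) * ip + H ^ (k+2) * (-s) * U ^ (-s-1) * P^2)
    ≤ (m^2/(4*s)) * (O * U ^ tt * H ^ k * Q^2) := by
  have key : U ^ (-s) * m * H ^ (k+1) * ip + H ^ (k+2) * (-s) * U ^ (-s-1) * P^2
      ≤ (m^2/(4*s)) * (U ^ tt * H ^ k * Q^2) := by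
    set x₁ := Real.sqrt (U ^ (-s-1) * H ^ (k+2)) * P with hx₁
    set y₁ := Real.sqrt (U ^ tt * H ^ k) * Q with hy₁
    have hx₁sq : x₁^2 = U ^ (-s-1) * H ^ (k+2) * P^2 := by
      rw [hx₁, mul_pow, Real.sq_sqrt (by positivity)]
    have hy₁sq : y₁^2 = U ^ tt * H ^ k * Q^2 := by
      rw [hy₁, mul_pow, Real.sq_sqrt (by positivity)]
    have hxy : x₁ * y₁ = U ^ (-s) * H ^ (k+1) * (P * Q) := by
      rw [hx₁, hy₁]
      have : Real.sqrt (U ^ (-s-1) * H ^ (k+2)) * Real.sqrt (U ^ tt * H ^ k)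
          = U ^ (-s) * H ^ (k+1) := by
        rw [← Real.sqrt_mul (by positivity)]
        have heq : U ^ (-s-1) * H ^ (k+2) * (U ^ tt * H ^ k)
            = (U ^ (-s) * H ^ (k+1))^2 := by
          have h1 : U ^ (-s-1) * U ^ tt = (U ^ (-s))^2 := by
            rw [← Real.rpow_add hU, ← Real.rpow_natCast (U ^ (-s)) 2, ← Real.rpow_mul hU.le]
            congr 1
            rw [htt]; push_cast; ring
          have h2 : H ^ (k+2) * H ^ k = (H ^ (k+1))^2 := by ring
          calc U ^ (-s-1) * H ^ (k+2) * (U ^ tt * H ^ k)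
              = (U ^ (-s-1) * U ^ tt) * (H ^ (k+2) * H ^ k) := by ring
            _ = (U ^ (-s))^2 * (H ^ (k+1))^2 := by rw [h1, h2]
            _ = _ := by ring
        rw [heq, Real.sqrt_sq (by positivity)]
      rw [show Real.sqrt (U ^ (-s-1) * H ^ (k+2)) * P * (Real.sqrt (U ^ tt * H ^ k) * Q)
          = (Real.sqrt (U ^ (-s-1) * H ^ (k+2)) * Real.sqrt (U ^ tt * H ^ k)) * (P * Q) by ring,
        this]
    have hamgm : (m:ℝ) * (x₁ * y₁) ≤ s * x₁^2 + (m^2/(4*s)) * y₁^2 := by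
      have h4s : (0:ℝ) < 4*s := by linarith
      have key2 : ((m:ℝ)*(x₁*y₁) - s*x₁^2) ≤ (m:ℝ)^2*y₁^2/(4*s) := by
        rw [le_div_iff₀ h4s]
        nlinarith [sq_nonneg (2*s*x₁ - (m:ℝ)*y₁)]
      have heq2 : (m:ℝ)^2/(4*s)*y₁^2 = (m:ℝ)^2*y₁^2/(4*s) := by ring
      linarith [key2]
    have hip' : U ^ (-s) * m * H ^ (k+1) * ip ≤ (m:ℝ) * (x₁ * y₁) := by
      rw [hxy]
      have hc : 0 ≤ U ^ (-s) * m * H ^ (k+1) := by positivity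
      calc U ^ (-s) * m * H ^ (k+1) * ip ≤ U ^ (-s) * m * H ^ (k+1) * (Q * P) := by
            apply mul_le_mul_of_nonneg_left hip hc
        _ = (m:ℝ) * (U ^ (-s) * H ^ (k+1) * (P * Q)) := by ring
    have hXcancel : H ^ (k+2) * (-s) * U ^ (-s-1) * P^2 = -(s * x₁^2) := by
      rw [hx₁sq]; ring
    calc U ^ (-s) * m * H ^ (k+1) * ip + H ^ (k+2) * (-s) * U ^ (-s-1) * P^2
        ≤ (m:ℝ) * (x₁ * y₁) + -(s * x₁^2) := by
          rw [← hXcancel]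
          exact add_le_add_left hip' _
      _ ≤ s * x₁^2 + (m^2/(4*s)) * y₁^2 + -(s * x₁^2) := add_le_add_left hamgm _
      _ = (m^2/(4*s)) * y₁^2 := by ring
      _ = (m^2/(4*s)) * (U ^ tt * H ^ k * Q^2) := by rw [hy₁sq]
  calc O * (U ^ (-s) * m * H ^ (k+1) * ip + H ^ (k+2) * (-s) * U ^ (-s-1) * P^2)
      ≤ O * ((m^2/(4*s)) * (U ^ tt * H ^ k * Q^2)) := mul_le_mul_of_nonneg_left key hO
    _ = (m^2/(4*s)) * (O * U ^ tt * H ^ k * Q^2) := by ring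
set_option maxHeartbeats 1000000 in
theorem stmt_7 (N : ℕ) (hN : 1 ≤ N) (p : ℝ) (hp : 1 < p)
    (ω₁ ω₂ : EuclideanSpace ℝ (Fin N) → ℝ)
    (hω₁ : ContDiff ℝ (⊤ : ℕ∞) ω₁) (hω₂ : ContDiff ℝ (⊤ : ℕ∞) ω₂)
    (hω₁pos : ∀ x, 0 < ω₁ x) (hω₂pos : ∀ x, 0 < ω₂ x)
    (hmono : ∃ R₀ : ℝ, ∀ x : EuclideanSpace ℝ (Fin N), R₀ ≤ ‖x‖ → ⟪gradient ω₁ x, x⟫ ≤ 0)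
    (t : ℝ) (ht1 : 0 < t) (ht2 : t < 1/2)
    (hIL : Tendsto (fun R : ℝ =>
      R ^ (-2*(2*t + p - 1)/(p - 1)) *
        ∫ x in annulus N R, (ω₁ x ^ (p + 2*t - 1) / ω₂ x ^ (2*t)) ^ (1/(p - 1)))
      atTop (nhds 0)) :
    ¬ ∃ u : EuclideanSpace ℝ (Fin N) → ℝ, ContDiff ℝ 2 u ∧ (∀ x, 0 < u x) ∧
      (∀ x, ω₂ x * u x ^ p ≤ -vdiv (fun y => ω₁ y • gradient u y) x) ∧
      (∀ ψ : EuclideanSpace ℝ (Fin N) → ℝ, ContDiff ℝ 2 ψ → HasCompactSupport ψ →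
        ∫ x, p * ω₂ x * u x ^ (p - 1) * ψ x ^ 2 ≤ ∫ x, ω₁ x * ‖gradient ψ x‖ ^ 2) := by
  rintro ⟨u, hu, hupos, hsuper, -⟩
  obtain ⟨n, rfl⟩ : ∃ n, N = n + 1 := ⟨N - 1, (Nat.succ_pred_eq_of_pos hN).symm⟩
  clear hN hmono
  -- basic positivity facts about exponents
  have hq : 0 < p + 2*t - 1 := by linarith
  have hp1 : 0 < p - 1 := by linarith
  have hs0 : 0 < 1 - 2*t := by linarith
  have ht0 : 0 < 2*t := by linarith
  set θ₁ : ℝ := 2*t/(p + 2*t - 1) with hθ₁def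
  set θ₂ : ℝ := (p-1)/(p + 2*t - 1) with hθ₂def
  have hθ₁pos : 0 < θ₁ := by positivity
  have hθ₂pos : 0 < θ₂ := by positivity
  have hθsum : θ₁ + θ₂ = 1 := by
    rw [hθ₁def, hθ₂def]
    field_simp
    ring
  set k : ℕ := ⌈2*(p + 2*t - 1)/(p-1)⌉₊ with hkdef
  have hkk : 2*(p + 2*t - 1)/(p-1) ≤ (k:ℝ) := Nat.le_ceil _
  have hk1 : 1 ≤ k := by
    have h0 : (1:ℝ) ≤ 2*(p + 2*t - 1)/(p-1) := by
      rw [le_div_iff₀ hp1]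
      nlinarith
    have : (1:ℝ) ≤ (k:ℝ) := le_trans h0 hkk
    exact_mod_cast this
  have hκpos : 0 < ((k:ℝ)+2)*((p-1)/(p + 2*t - 1)) - 2 := by
    have h1 : 2*(p + 2*t - 1) ≤ (k:ℝ)*(p-1) := by
      rw [div_le_iff₀ hp1] at hkk
      linarith
    rw [sub_pos]
    rw [show ((k:ℝ)+2)*((p-1)/(p + 2*t - 1)) = ((k:ℝ)+2)*(p-1)/(p + 2*t - 1) by ring]
    rw [lt_div_iff₀ hq]
    nlinarith
  -- the bump function and a bound on its gradient
  set bump : ContDiffBump (0 : EuclideanSpace ℝ (Fin (n+1))) := ⟨1, 2, one_pos, one_lt_two⟩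
    with hbumpdef
  have hbc : ContDiff ℝ 2 ⇑bump := bump.contDiff
  have hbgrad_cont : Continuous (gradient ⇑bump) := continuous_gradient hbc
  have hgcs : HasCompactSupport (gradient ⇑bump) :=
    IsCompact.of_isClosed_subset bump.hasCompactSupport isClosed_closure
      (closure_minimal support_gradient_subset (isClosed_tsupport _))
  obtain ⟨M0, hM0⟩ := hbgrad_cont.norm.bounded_above_of_compact_support hgcs.norm
  set M : ℝ := max M0 1 with hMdef
  have hM1 : (1:ℝ) ≤ M := le_max_right _ _
  have hMpos : (0:ℝ) < M := lt_of_lt_of_le one_pos hM1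
  have hMb : ∀ y, ‖gradient (⇑bump) y‖ ≤ M := fun y => le_max_of_le_left (by simpa using hM0 y)
  -- differentiability facts
  have hud : Differentiable ℝ u := hu.differentiable (by norm_num)
  have hucont : Continuous u := hu.continuous
  have hgradu_cont : Continuous (gradient u) := continuous_gradient hu
  -- the vector field
  set Wf : EuclideanSpace ℝ (Fin (n+1)) → EuclideanSpace ℝ (Fin (n+1)) :=
    fun y => ω₁ y • gradient u y with hWfdef
  have hW1 : ContDiff ℝ 1 Wf :=
    (hω₁.of_le (by simp)).smul (contDiff_gradient (n := 1) (by exact_mod_cast hu))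
  have hWd : ∀ x, DifferentiableAt ℝ Wf x := fun x =>
    ((hW1.differentiable one_ne_zero) x)
  -- v = u ^ (-(1-2t))
  set v : EuclideanSpace ℝ (Fin (n+1)) → ℝ := fun x => u x ^ (-(1-2*t)) with hvdef
  have hv2 : ContDiff ℝ 2 v := by
    rw [contDiff_iff_contDiffAt]
    intro x
    exact hu.contDiffAt.rpow_const_of_ne (ne_of_gt (hupos x))
  have hvpos : ∀ x, 0 < v x := fun x => Real.rpow_pos_of_pos (hupos x) _
  -- A₀
  have hFq_cont : Continuous (fun x : EuclideanSpace ℝ (Fin (n+1)) =>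
      ω₂ x * u x ^ (p + 2*t - 1)) :=
    hω₂.continuous.mul (hucont.rpow_const fun x => Or.inl (ne_of_gt (hupos x)))
  set A₀ : ℝ := ∫ x in Metric.closedBall (0 : EuclideanSpace ℝ (Fin (n+1))) 1,
      ω₂ x * u x ^ (p + 2*t - 1) with hA₀def
  have hA₀pos : 0 < A₀ := by
    obtain ⟨x₀, hx₀mem, hx₀min⟩ := (isCompact_closedBall (0 : EuclideanSpace ℝ (Fin (n+1))) 1).exists_isMinOn
      ⟨0, Metric.mem_closedBall_self one_pos.le⟩ hFq_cont.continuousOn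
    set c₀ : ℝ := ω₂ x₀ * u x₀ ^ (p + 2*t - 1) with hc₀def
    have hc₀pos : 0 < c₀ := by
      rw [hc₀def]
      have h1 := hupos x₀
      have h2 := hω₂pos x₀
      positivity
    have hinteg : IntegrableOn (fun x => ω₂ x * u x ^ (p + 2*t - 1))
        (Metric.closedBall (0 : EuclideanSpace ℝ (Fin (n+1))) 1) volume :=
      hFq_cont.continuousOn.integrableOn_compact (isCompact_closedBall _ _)
    have hvol : 0 < (volume (Metric.closedBall (0 : EuclideanSpace ℝ (Fin (n+1))) 1)).toReal := by
      refine ENNReal.toReal_pos (ne_of_gt (Metric.measure_closedBall_pos volume 0 one_pos)) ?_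
      exact (measure_closedBall_lt_top).ne
    have hconst : c₀ * (volume (Metric.closedBall (0 : EuclideanSpace ℝ (Fin (n+1))) 1)).toReal
        ≤ A₀ := by
      have hmono := setIntegral_mono_on (f := fun _ => c₀)
        (integrableOn_const measure_closedBall_lt_top.ne)
        hinteg measurableSet_closedBall (fun x hx => hx₀min hx)
      rw [setIntegral_const] at hmono
      rw [hA₀def]
      calc c₀ * (volume (Metric.closedBall (0 : EuclideanSpace ℝ (Fin (n+1))) 1)).toReal
          = (volume (Metric.closedBall (0 : EuclideanSpace ℝ (Fin (n+1))) 1)).toReal • c₀ := by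
            rw [smul_eq_mul]; ring
        _ ≤ _ := hmono
    nlinarith
  -- the quantity from hIL
  set JR : ℝ → ℝ := fun R =>
      R ^ (-2*(2*t + p - 1)/(p - 1)) *
        ∫ x in annulus (n+1) R, (ω₁ x ^ (p + 2*t - 1) / ω₂ x ^ (2*t)) ^ (1/(p - 1)) with hJRdef
  set Cam : ℝ := ((k+2 : ℕ) : ℝ)^2/(4*(1-2*t)) with hCamdef
  have hCampos : 0 < Cam := by positivity
  set CC : ℝ := Cam * (M ^ (2*((p + 2*t - 1)/(p-1)))) ^ θ₂ with hCCdef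
  have hCCpos : 0 < CC := by positivity
  -- MAIN ESTIMATE
  have main : ∀ R : ℝ, 1 ≤ R → A₀ ^ θ₂ ≤ CC * JR R ^ θ₂ := by
    intro R hR1
    have hR0 : (0:ℝ) < R := lt_of_lt_of_le one_pos hR1
    -- cut-off function
    set η : EuclideanSpace ℝ (Fin (n+1)) → ℝ := fun x => bump (R⁻¹ • x) with hηdef
    have hη2 : ContDiff ℝ 2 η := hbc.comp (contDiff_id.const_smul R⁻¹)
    have hηcont : Continuous η := hη2.continuous
    have hηd : ∀ x, DifferentiableAt ℝ η x := fun x =>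
      ((hη2.differentiable (by norm_num)) x)
    have hηnn : ∀ x, 0 ≤ η x := fun x => bump.nonneg
    have hηle1 : ∀ x, η x ≤ 1 := fun x => bump.le_one
    have hnrm : ∀ x : EuclideanSpace ℝ (Fin (n+1)), ‖R⁻¹ • x‖ = R⁻¹ * ‖x‖ := by
      intro x
      rw [norm_smul, Real.norm_eq_abs, abs_of_pos (inv_pos.mpr hR0)]
    have hηone : ∀ x, ‖x‖ ≤ R → η x = 1 := by
      intro x hx
      apply bump.one_of_mem_closedBall
      rw [Metric.mem_closedBall, dist_zero_right, hnrm]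
      calc R⁻¹ * ‖x‖ ≤ R⁻¹ * R := by
            apply mul_le_mul_of_nonneg_left hx (inv_pos.mpr hR0).le
        _ = 1 := inv_mul_cancel₀ (ne_of_gt hR0)
    have hηzero : ∀ x, 2*R ≤ ‖x‖ → η x = 0 := by
      intro x hx
      apply bump.zero_of_le_dist
      rw [dist_zero_right, hnrm]
      show (2:ℝ) ≤ R⁻¹ * ‖x‖
      calc (2:ℝ) = R⁻¹ * (2*R) := by field_simp
        _ ≤ R⁻¹ * ‖x‖ := by
            apply mul_le_mul_of_nonneg_left hx (inv_pos.mpr hR0).le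
    have hgradη : ∀ x, gradient η x = R⁻¹ • gradient (⇑bump) (R⁻¹ • x) := fun x =>
      gradient_comp_const_smul ((hbc.differentiable (by norm_num)) _)
    have hgradη_cont : Continuous (gradient η) := continuous_gradient hη2
    have hgradη_bound : ∀ x, ‖gradient η x‖ ≤ M/R := by
      intro x
      rw [hgradη, norm_smul, Real.norm_eq_abs, abs_of_pos (inv_pos.mpr hR0)]
      rw [div_eq_inv_mul]
      exact mul_le_mul_of_nonneg_left (hMb _) (inv_pos.mpr hR0).le
    have hgradη_inner : ∀ x, ‖x‖ ≤ R → gradient η x = 0 := by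
      intro x hx
      rw [hgradη]
      have h0 : gradient (⇑bump) (R⁻¹ • x) = 0 := by
        apply gradient_eq_zero_of_isLocalMax
        apply Filter.Eventually.of_forall
        intro y
        have h1 : bump (R⁻¹ • x) = 1 := by
          apply bump.one_of_mem_closedBall
          rw [Metric.mem_closedBall, dist_zero_right, hnrm]
          calc R⁻¹ * ‖x‖ ≤ R⁻¹ * R :=
              mul_le_mul_of_nonneg_left hx (inv_pos.mpr hR0).le
            _ = 1 := inv_mul_cancel₀ (ne_of_gt hR0)
        rw [h1]
        exact bump.le_one
      rw [h0, smul_zero]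
    have hgradη_outer : ∀ x, 2*R ≤ ‖x‖ → gradient η x = 0 := by
      intro x hx
      rw [hgradη]
      have h0 : gradient (⇑bump) (R⁻¹ • x) = 0 := by
        apply gradient_eq_zero_of_isLocalMin
        apply Filter.Eventually.of_forall
        intro y
        have h1 : bump (R⁻¹ • x) = 0 := by
          apply bump.zero_of_le_dist
          rw [dist_zero_right, hnrm]
          show (2:ℝ) ≤ R⁻¹ * ‖x‖
          calc (2:ℝ) = R⁻¹ * (2*R) := by field_simp
            _ ≤ R⁻¹ * ‖x‖ := mul_le_mul_of_nonneg_left hx (inv_pos.mpr hR0).le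
        rw [h1]
        exact bump.nonneg
      rw [h0, smul_zero]
    have hηsupp : ∀ x, η x ≠ 0 → ‖x‖ < 2*R := by
      intro x hx
      by_contra h
      push_neg at h
      exact hx (hηzero x h)
    have htsuppη : tsupport η ⊆ Metric.closedBall 0 (2*R) := by
      apply closure_minimal
      · intro x hx
        rw [Metric.mem_closedBall, dist_zero_right]
        exact (hηsupp x hx).le
      · exact Metric.isClosed_closedBall
    -- test function
    set φ : EuclideanSpace ℝ (Fin (n+1)) → ℝ := fun x => v x * η x ^ (k+2) with hφdef
    have hφ2 : ContDiff ℝ 2 φ := hv2.mul (hη2.pow (k+2))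
    have hφd : ∀ x, DifferentiableAt ℝ φ x := fun x =>
      ((hφ2.differentiable (by norm_num)) x)
    have hφnn : ∀ x, 0 ≤ φ x := fun x =>
      mul_nonneg (hvpos x).le (pow_nonneg (hηnn x) _)
    have hφsupp : Function.support φ ⊆ Metric.closedBall 0 (2*R) := by
      intro x hx
      rw [Metric.mem_closedBall, dist_zero_right]
      apply le_of_lt
      apply hηsupp
      intro h0
      apply hx
      rw [hφdef]
      show v x * η x ^ (k+2) = 0
      rw [h0]
      simp
    have htsuppφ : tsupport φ ⊆ Metric.closedBall 0 (2*R) :=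
      closure_minimal hφsupp Metric.isClosed_closedBall
    -- the main integrands
    set F : EuclideanSpace ℝ (Fin (n+1)) → ℝ := fun x =>
      ω₂ x * u x ^ (p + 2*t - 1) * η x ^ (k+2) with hFdef
    set e : EuclideanSpace ℝ (Fin (n+1)) → ℝ := fun x =>
      ω₁ x * u x ^ (2*t) * η x ^ k * ‖gradient η x‖ ^ 2 with hedef
    set G : EuclideanSpace ℝ (Fin (n+1)) → ℝ := fun x =>
      (ω₁ x ^ (p + 2*t - 1) / ω₂ x ^ (2*t)) ^ (1/(p-1))
        * (η x ^ (((k:ℝ)+2)*((p-1)/(p + 2*t - 1)) - 2) * ‖gradient η x‖ ^ 2)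
          ^ ((p + 2*t - 1)/(p-1)) with hGdef
    -- continuity and integrability
    have hFcont : Continuous F := (hFq_cont.mul (hηcont.pow _))
    have hecont : Continuous e :=
      ((hω₁.continuous.mul (hucont.rpow_const fun x => Or.inl (ne_of_gt (hupos x)))).mul
        (hηcont.pow _)).mul (hgradη_cont.norm.pow 2)
    have hGcont : Continuous G := by
      apply Continuous.mul
      · apply Continuous.rpow_const
        · exact (hω₁.continuous.rpow_const fun x => Or.inl (ne_of_gt (hω₁pos x))).div
            (hω₂.continuous.rpow_const fun x => Or.inl (ne_of_gt (hω₂pos x)))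
            (fun x => ne_of_gt (Real.rpow_pos_of_pos (hω₂pos x) _))
        · intro x
          right
          positivity
      · apply Continuous.rpow_const
        · exact (hηcont.rpow_const fun x => Or.inr hκpos.le).mul (hgradη_cont.norm.pow 2)
        · intro x
          right
          positivity
    have hF0 : ∀ x, 0 ≤ F x := by
      intro x
      show 0 ≤ ω₂ x * u x ^ (p + 2*t - 1) * η x ^ (k+2)
      have h1 := hupos x
      have h2 := hω₂pos x
      have h3 := hηnn x
      positivity
    have he0 : ∀ x, 0 ≤ e x := by
      intro x
      show 0 ≤ ω₁ x * u x ^ (2*t) * η x ^ k * ‖gradient η x‖ ^ 2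
      have h1 := hupos x
      have h2 := hω₁pos x
      have h3 := hηnn x
      positivity
    have hG0 : ∀ x, 0 ≤ G x := by
      intro x
      show 0 ≤ (ω₁ x ^ (p + 2*t - 1) / ω₂ x ^ (2*t)) ^ (1/(p-1))
        * (η x ^ (((k:ℝ)+2)*((p-1)/(p + 2*t - 1)) - 2) * ‖gradient η x‖ ^ 2)
          ^ ((p + 2*t - 1)/(p-1))
      have h1 := hω₁pos x
      have h2 := hω₂pos x
      have h3 := hηnn x
      positivity
    have hFint : Integrable F := by
      apply hFcont.integrable_of_hasCompactSupport
      apply hcs_of_support_subset (r := 2*R)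
      intro x hx
      apply htsuppη
      apply subset_tsupport
      intro h0
      apply hx
      show ω₂ x * u x ^ (p + 2*t - 1) * η x ^ (k+2) = 0
      rw [h0]
      simp
    have hgradsupp : Function.support (gradient η) ⊆ Metric.closedBall 0 (2*R) :=
      fun x hx => htsuppη (support_gradient_subset hx)
    have heint : Integrable e := by
      apply hecont.integrable_of_hasCompactSupport
      apply hcs_of_support_subset (r := 2*R)
      intro x hx
      apply hgradsupp
      intro h0
      apply hx
      show ω₁ x * u x ^ (2*t) * η x ^ k * ‖gradient η x‖ ^ 2 = 0
      rw [h0]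
      simp
    have hGint : Integrable G := by
      apply hGcont.integrable_of_hasCompactSupport
      apply hcs_of_support_subset (r := 2*R)
      intro x hx
      apply hgradsupp
      intro h0
      apply hx
      show (ω₁ x ^ (p + 2*t - 1) / ω₂ x ^ (2*t)) ^ (1/(p-1))
        * (η x ^ (((k:ℝ)+2)*((p-1)/(p + 2*t - 1)) - 2) * ‖gradient η x‖ ^ 2)
          ^ ((p + 2*t - 1)/(p-1)) = 0
      rw [h0]
      rw [norm_zero]
      rw [show ((0:ℝ) ^ 2 : ℝ) = 0 by norm_num, mul_zero,
        Real.zero_rpow (by positivity), mul_zero]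
    set A : ℝ := ∫ x, F x with hAdef
    set Eint : ℝ := ∫ x, e x with hEdef
    -- A₀ ≤ A
    have hA0A : A₀ ≤ A := by
      have hcongr : A₀ = ∫ x in Metric.closedBall (0 : EuclideanSpace ℝ (Fin (n+1))) 1, F x := by
        rw [hA₀def]
        apply setIntegral_congr_fun measurableSet_closedBall
        intro x hx
        rw [Metric.mem_closedBall, dist_zero_right] at hx
        have : η x = 1 := hηone x (le_trans hx hR1)
        show ω₂ x * u x ^ (p + 2*t - 1) = ω₂ x * u x ^ (p + 2*t - 1) * η x ^ (k+2)
        rw [this]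
        simp
      rw [hcongr, hAdef]
      exact setIntegral_le_integral hFint (Filter.Eventually.of_forall hF0)
    have hApos : 0 < A := lt_of_lt_of_le hA₀pos hA0A
    -- Integration by parts
    have hφW1 : ContDiff ℝ 1 (fun y => φ y • Wf y) := (hφ2.of_le (by norm_num)).smul hW1
    have hφWcs : HasCompactSupport (fun y => φ y • Wf y) := by
      apply hcs_of_support_subset (r := 2*R)
      intro x hx
      apply hφsupp
      intro h0
      apply hx
      show φ x • Wf x = 0
      rw [h0, zero_smul]
    have hdiv0 : ∫ x, vdiv (fun y => φ y • Wf y) x = 0 :=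
      integral_vdiv_eq_zero _ hφW1 hφWcs
    have hsplit : ∀ x, vdiv (fun y => φ y • Wf y) x
        = ⟪gradient φ x, Wf x⟫ + φ x * vdiv Wf x := fun x =>
      vdiv_smul (hφd x) (hWd x)
    have hg₁cont : Continuous (fun x => ⟪gradient φ x, Wf x⟫) :=
      (continuous_gradient hφ2).inner (hω₁.continuous.smul hgradu_cont)
    have hgradφ_supp : Function.support (gradient φ) ⊆ Metric.closedBall 0 (2*R) :=
      fun x hx => htsuppφ (support_gradient_subset hx)
    have hg₁int : Integrable (fun x => ⟪gradient φ x, Wf x⟫) := by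
      apply hg₁cont.integrable_of_hasCompactSupport
      apply hcs_of_support_subset (r := 2*R)
      intro x hx
      apply hgradφ_supp
      intro h0
      apply hx
      show ⟪gradient φ x, Wf x⟫ = 0
      rw [h0, inner_zero_left]
    have hg₂cont : Continuous (fun x => φ x * vdiv Wf x) :=
      hφ2.continuous.mul (continuous_vdiv hW1)
    have hg₂int : Integrable (fun x => φ x * vdiv Wf x) := by
      apply hg₂cont.integrable_of_hasCompactSupport
      apply hcs_of_support_subset (r := 2*R)
      intro x hx
      apply hφsupp
      intro h0
      apply hx
      show φ x * vdiv Wf x = 0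
      rw [h0, zero_mul]
    have hsum0 : (∫ x, ⟪gradient φ x, Wf x⟫) + ∫ x, φ x * vdiv Wf x = 0 := by
      rw [← integral_add hg₁int hg₂int, ← hdiv0]
      apply integral_congr_ae
      filter_upwards with x
      exact (hsplit x).symm
    have hg₃int : Integrable (fun x => φ x * (-vdiv Wf x)) := by
      have : (fun x => φ x * (-vdiv Wf x)) = fun x => -(φ x * vdiv Wf x) := by
        funext x; ring
      rw [this]
      exact hg₂int.neg
    have hIBP : ∫ x, φ x * (-vdiv Wf x) = ∫ x, ⟪gradient φ x, Wf x⟫ := by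
      have h1 : ∫ x, φ x * (-vdiv Wf x) = - ∫ x, φ x * vdiv Wf x := by
        rw [← integral_neg]
        apply integral_congr_ae
        filter_upwards with x
        ring
      rw [h1]
      linarith
    -- A ≤ ∫ φ (-div W)
    have hA_le1 : A ≤ ∫ x, φ x * (-vdiv Wf x) := by
      rw [hAdef]
      apply integral_mono hFint hg₃int
      intro x
      show F x ≤ φ x * (-vdiv Wf x)
      have heq : F x = φ x * (ω₂ x * u x ^ p) := by
        show ω₂ x * u x ^ (p + 2*t - 1) * η x ^ (k+2)
          = (u x ^ (-(1-2*t)) * η x ^ (k+2)) * (ω₂ x * u x ^ p)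
        have h2 : u x ^ (-(1-2*t)) * u x ^ p = u x ^ (p + 2*t - 1) := by
          rw [← Real.rpow_add (hupos x)]
          congr 1
          ring
        calc ω₂ x * u x ^ (p + 2*t - 1) * η x ^ (k+2)
            = ω₂ x * (u x ^ (-(1-2*t)) * u x ^ p) * η x ^ (k+2) := by rw [h2]
          _ = (u x ^ (-(1-2*t)) * η x ^ (k+2)) * (ω₂ x * u x ^ p) := by ring
      rw [heq]
      exact mul_le_mul_of_nonneg_left (hsuper x) (hφnn x)
    -- pointwise gradient estimate
    have step2 : ∀ x, ⟪gradient φ x, Wf x⟫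
        ≤ Cam * (ω₁ x * u x ^ (2*t) * η x ^ k * ‖gradient η x‖ ^ 2) := by
      intro x
      have hvd : DifferentiableAt ℝ v x := (hv2.differentiable (by norm_num)) x
      have hηpd : DifferentiableAt ℝ (fun y => η y ^ (k+2)) x := (hηd x).pow (k+2)
      have hgφ : gradient φ x = v x • gradient (fun y => η y ^ (k+2)) x
          + (η x ^ (k+2)) • gradient v x := gradient_mul hvd hηpd
      have h2 : gradient (fun y => η y ^ (k+2)) x
          = (((k+2 : ℕ) : ℝ) * η x ^ (k+1)) • gradient η x := by
        have := gradient_npow (hηd x) (k+2)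
        simpa using this
      have h3 : gradient v x
          = ((-(1-2*t)) * u x ^ (-(1-2*t) - 1)) • gradient u x :=
        gradient_rpow (hud x) (ne_of_gt (hupos x)) _
      have hWx : Wf x = ω₁ x • gradient u x := rfl
      have hexp : ⟪gradient φ x, Wf x⟫
          = ω₁ x * (u x ^ (-(1-2*t)) * ((k+2 : ℕ) : ℝ) * η x ^ (k+1)
              * ⟪gradient η x, gradient u x⟫
            + η x ^ (k+2) * (-(1-2*t)) * u x ^ (-(1-2*t)-1) * ‖gradient u x‖^2) := by
        rw [hgφ, h2, h3, hWx]
        rw [inner_add_left, real_inner_smul_left, real_inner_smul_left,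
          real_inner_smul_left, real_inner_smul_left, real_inner_smul_right,
          real_inner_smul_right, real_inner_self_eq_norm_sq]
        ring
      rw [hexp]
      have hip := real_inner_le_norm (gradient η x) (gradient u x)
      have hb := amgm_bound hs0 k (k+2) (hupos x) (hηnn x) (norm_nonneg (gradient u x))
        (norm_nonneg (gradient η x)) (hω₁pos x).le hip (by ring : 2*t = 1 - (1-2*t))
      exact hb
    have hA_le2 : (∫ x, ⟪gradient φ x, Wf x⟫) ≤ Cam * Eint := by
      calc (∫ x, ⟪gradient φ x, Wf x⟫) ≤ ∫ x, Cam * e x := by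
            apply integral_mono hg₁int (heint.const_mul _)
            intro x
            exact step2 x
        _ = Cam * Eint := by
            rw [hEdef, integral_const_mul]
    have hAE : A ≤ Cam * Eint := by
      calc A ≤ ∫ x, φ x * (-vdiv Wf x) := hA_le1
        _ = ∫ x, ⟪gradient φ x, Wf x⟫ := hIBP
        _ ≤ Cam * Eint := hA_le2
    -- Hölder
    have heqpt : ∀ x, e x = F x ^ θ₁ * G x ^ θ₂ := by
      intro x
      by_cases hη0 : η x = 0
      · show ω₁ x * u x ^ (2*t) * η x ^ k * ‖gradient η x‖ ^ 2 = F x ^ θ₁ * G x ^ θ₂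
        have hF0' : F x = 0 := by
          show ω₂ x * u x ^ (p + 2*t - 1) * η x ^ (k+2) = 0
          rw [hη0]
          simp
        rw [hη0, hF0', Real.zero_rpow (ne_of_gt hθ₁pos), zero_mul,
          zero_pow (by omega : k ≠ 0)]
        ring
      · by_cases hQ0 : gradient η x = 0
        · show ω₁ x * u x ^ (2*t) * η x ^ k * ‖gradient η x‖ ^ 2 = F x ^ θ₁ * G x ^ θ₂
          have hG0' : G x = 0 := by
            show (ω₁ x ^ (p + 2*t - 1) / ω₂ x ^ (2*t)) ^ (1/(p-1))
              * (η x ^ (((k:ℝ)+2)*((p-1)/(p + 2*t - 1)) - 2) * ‖gradient η x‖ ^ 2)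
                ^ ((p + 2*t - 1)/(p-1)) = 0
            rw [hQ0, norm_zero]
            rw [show ((0:ℝ) ^ 2 : ℝ) = 0 by norm_num, mul_zero,
              Real.zero_rpow (by positivity), mul_zero]
          rw [hQ0, hG0', Real.zero_rpow (ne_of_gt hθ₂pos), mul_zero, norm_zero]
          ring
        · have hηpos : 0 < η x := lt_of_le_of_ne (hηnn x) (Ne.symm hη0)
          have hQpos : 0 < ‖gradient η x‖ := norm_pos_iff.mpr hQ0
          exact key_identity hp ht1 k (hω₁pos x) (hω₂pos x) (hupos x) hηpos hQpos
    have hEholder : Eint ≤ A ^ θ₁ * (∫ x, G x) ^ θ₂ := by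
      rw [hEdef, hAdef]
      exact holder_bochner hFint hGint hecont.aestronglyMeasurable hF0 hG0
        hθ₁pos.le hθ₂pos.le hθsum heqpt
    -- bound ∫ G
    have hann_meas : MeasurableSet (annulus (n+1) R) := by
      have : annulus (n+1) R
          = {x : EuclideanSpace ℝ (Fin (n+1)) | R < ‖x‖} ∩ {x | ‖x‖ < 2*R} := by
        ext x
        simp [annulus, Set.mem_setOf_eq]
      rw [this]
      exact ((isOpen_lt continuous_const continuous_norm).inter
        (isOpen_lt continuous_norm continuous_const)).measurableSet
    set base : EuclideanSpace ℝ (Fin (n+1)) → ℝ := fun x =>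
      (ω₁ x ^ (p + 2*t - 1) / ω₂ x ^ (2*t)) ^ (1/(p-1)) with hbasedef
    have hbase_cont : Continuous base :=
      ((hω₁.continuous.rpow_const fun x => Or.inl (ne_of_gt (hω₁pos x))).div
        (hω₂.continuous.rpow_const fun x => Or.inl (ne_of_gt (hω₂pos x)))
        (fun x => ne_of_gt (Real.rpow_pos_of_pos (hω₂pos x) _))).rpow_const
        (fun x => Or.inr (by positivity))
    have hbase0 : ∀ x, 0 ≤ base x := by
      intro x
      have h1 := hω₁pos x
      have h2 := hω₂pos x
      positivity
    have hann_sub : annulus (n+1) R ⊆ Metric.closedBall 0 (2*R) := by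
      intro x hx
      rw [Metric.mem_closedBall, dist_zero_right]
      exact hx.2.le
    have hbase_int_on : IntegrableOn base (annulus (n+1) R) volume :=
      (hbase_cont.continuousOn.integrableOn_compact
        (isCompact_closedBall (0 : EuclideanSpace ℝ (Fin (n+1))) (2*R))).mono_set hann_sub
    set Iann : ℝ := ∫ x in annulus (n+1) R, base x with hIanndef
    have hIann0 : 0 ≤ Iann :=
      setIntegral_nonneg hann_meas (fun x _ => hbase0 x)
    have hGbound : (∫ x, G x) ≤ (M/R) ^ (2*((p + 2*t - 1)/(p-1))) * Iann := by
      have hind_int : Integrable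
          ((annulus (n+1) R).indicator
            (fun x => (M/R) ^ (2*((p + 2*t - 1)/(p-1))) * base x)) :=
        (IntegrableOn.integrable_indicator (hbase_int_on.const_mul _) hann_meas)
      have hpt : ∀ x, G x ≤ (annulus (n+1) R).indicator
          (fun x => (M/R) ^ (2*((p + 2*t - 1)/(p-1))) * base x) x := by
        intro x
        by_cases hmem : x ∈ annulus (n+1) R
        · rw [Set.indicator_of_mem hmem]
          show (ω₁ x ^ (p + 2*t - 1) / ω₂ x ^ (2*t)) ^ (1/(p-1))
            * (η x ^ (((k:ℝ)+2)*((p-1)/(p + 2*t - 1)) - 2) * ‖gradient η x‖ ^ 2)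
              ^ ((p + 2*t - 1)/(p-1))
            ≤ (M/R) ^ (2*((p + 2*t - 1)/(p-1))) * base x
          have hbnd : (η x ^ (((k:ℝ)+2)*((p-1)/(p + 2*t - 1)) - 2) * ‖gradient η x‖ ^ 2)
              ^ ((p + 2*t - 1)/(p-1)) ≤ (M/R) ^ (2*((p + 2*t - 1)/(p-1))) := by
            have h1 : η x ^ (((k:ℝ)+2)*((p-1)/(p + 2*t - 1)) - 2) ≤ 1 :=
              Real.rpow_le_one (hηnn x) (hηle1 x) hκpos.le
            have h2 : ‖gradient η x‖ ^ 2 ≤ (M/R) ^ 2 :=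
              pow_le_pow_left₀ (norm_nonneg _) (hgradη_bound x) 2
            have h3 : η x ^ (((k:ℝ)+2)*((p-1)/(p + 2*t - 1)) - 2) * ‖gradient η x‖ ^ 2
                ≤ (M/R) ^ 2 := by
              calc η x ^ (((k:ℝ)+2)*((p-1)/(p + 2*t - 1)) - 2) * ‖gradient η x‖ ^ 2
                  ≤ 1 * ((M/R) ^ 2) := by
                    apply mul_le_mul h1 h2 (by positivity) zero_le_one
                _ = (M/R) ^ 2 := one_mul _
            calc (η x ^ (((k:ℝ)+2)*((p-1)/(p + 2*t - 1)) - 2) * ‖gradient η x‖ ^ 2)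
                ^ ((p + 2*t - 1)/(p-1))
                ≤ ((M/R) ^ 2) ^ ((p + 2*t - 1)/(p-1)) := by
                  apply Real.rpow_le_rpow
                    (mul_nonneg (Real.rpow_nonneg (hηnn x) _) (by positivity)) h3 (by positivity)
              _ = (M/R) ^ (2*((p + 2*t - 1)/(p-1))) := by
                  rw [← Real.rpow_natCast (M/R) 2, ← Real.rpow_mul (by positivity)]
                  norm_num
          calc (ω₁ x ^ (p + 2*t - 1) / ω₂ x ^ (2*t)) ^ (1/(p-1))
              * (η x ^ (((k:ℝ)+2)*((p-1)/(p + 2*t - 1)) - 2) * ‖gradient η x‖ ^ 2)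
                ^ ((p + 2*t - 1)/(p-1))
              ≤ (ω₁ x ^ (p + 2*t - 1) / ω₂ x ^ (2*t)) ^ (1/(p-1))
                * (M/R) ^ (2*((p + 2*t - 1)/(p-1))) :=
                mul_le_mul_of_nonneg_left hbnd (hbase0 x)
            _ = (M/R) ^ (2*((p + 2*t - 1)/(p-1))) * base x := by
                rw [hbasedef]; ring
        · rw [Set.indicator_of_notMem hmem]
          have hgr0 : gradient η x = 0 := by
            rw [annulus, Set.mem_setOf_eq] at hmem
            push_neg at hmem
            by_cases hcase : R < ‖x‖
            · exact hgradη_outer x (hmem hcase)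
            · push_neg at hcase
              exact hgradη_inner x hcase
          show (ω₁ x ^ (p + 2*t - 1) / ω₂ x ^ (2*t)) ^ (1/(p-1))
            * (η x ^ (((k:ℝ)+2)*((p-1)/(p + 2*t - 1)) - 2) * ‖gradient η x‖ ^ 2)
              ^ ((p + 2*t - 1)/(p-1)) ≤ 0
          rw [hgr0, norm_zero]
          rw [show ((0:ℝ) ^ 2 : ℝ) = 0 by norm_num, mul_zero,
            Real.zero_rpow (by positivity), mul_zero]
      calc (∫ x, G x) ≤ ∫ x, (annulus (n+1) R).indicator
            (fun x => (M/R) ^ (2*((p + 2*t - 1)/(p-1))) * base x) x :=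
            integral_mono hGint hind_int hpt
        _ = ∫ x in annulus (n+1) R, (M/R) ^ (2*((p + 2*t - 1)/(p-1))) * base x :=
            integral_indicator hann_meas
        _ = (M/R) ^ (2*((p + 2*t - 1)/(p-1))) * Iann := by
            rw [hIanndef, integral_const_mul]
    -- cancel A^θ₁
    have hAθ : A ^ θ₂ ≤ Cam * (∫ x, G x) ^ θ₂ := by
      have h1 : A ^ θ₁ * A ^ θ₂ = A := by
        rw [← Real.rpow_add hApos, hθsum, Real.rpow_one]
      have h2 : A ^ θ₁ * A ^ θ₂ ≤ A ^ θ₁ * (Cam * (∫ x, G x) ^ θ₂) := by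
        rw [h1]
        calc A ≤ Cam * Eint := hAE
          _ ≤ Cam * (A ^ θ₁ * (∫ x, G x) ^ θ₂) :=
              mul_le_mul_of_nonneg_left hEholder hCampos.le
          _ = A ^ θ₁ * (Cam * (∫ x, G x) ^ θ₂) := by ring
      exact le_of_mul_le_mul_left h2 (Real.rpow_pos_of_pos hApos θ₁)
    have hA₀θ : A₀ ^ θ₂ ≤ A ^ θ₂ :=
      Real.rpow_le_rpow hA₀pos.le hA0A hθ₂pos.le
    -- convert the G bound
    have hMR : (M/R) ^ (2*((p + 2*t - 1)/(p-1)))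
        = M ^ (2*((p + 2*t - 1)/(p-1))) * R ^ (-2*(2*t + p - 1)/(p - 1)) := by
      rw [Real.div_rpow hMpos.le hR0.le]
      rw [div_eq_mul_inv, ← Real.rpow_neg hR0.le]
      congr 1
      ring
    have hGθfinal : (∫ x, G x) ^ θ₂
        ≤ (M ^ (2*((p + 2*t - 1)/(p-1)))) ^ θ₂ * JR R ^ θ₂ := by
      have hJRR : JR R = R ^ (-2*(2*t + p - 1)/(p - 1)) * Iann := rfl
      have h1 : (∫ x, G x) ^ θ₂ ≤ ((M/R) ^ (2*((p + 2*t - 1)/(p-1))) * Iann) ^ θ₂ :=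
        Real.rpow_le_rpow (integral_nonneg hG0) hGbound hθ₂pos.le
      have h2 : ((M/R) ^ (2*((p + 2*t - 1)/(p-1))) * Iann) ^ θ₂
          = (M ^ (2*((p + 2*t - 1)/(p-1)))) ^ θ₂ * JR R ^ θ₂ := by
        rw [hMR, hJRR, mul_assoc]
        rw [Real.mul_rpow (by positivity) (by positivity)]
      rw [← h2]
      exact h1
    calc A₀ ^ θ₂ ≤ A ^ θ₂ := hA₀θ
      _ ≤ Cam * (∫ x, G x) ^ θ₂ := hAθ
      _ ≤ Cam * ((M ^ (2*((p + 2*t - 1)/(p-1)))) ^ θ₂ * JR R ^ θ₂) :=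
          mul_le_mul_of_nonneg_left hGθfinal hCampos.le
      _ = CC * JR R ^ θ₂ := by rw [hCCdef]; ring
  -- derive the contradiction
  have htend : Tendsto (fun R => CC * JR R ^ θ₂) atTop (nhds 0) := by
    have h := hIL.rpow_const (Or.inr hθ₂pos.le)
    rw [Real.zero_rpow (ne_of_gt hθ₂pos)] at h
    have h2 := h.const_mul CC
    rw [mul_zero] at h2
    exact h2
  have hA₀θpos : 0 < A₀ ^ θ₂ := Real.rpow_pos_of_pos hA₀pos _
  have hev := htend.eventually_lt_const hA₀θpos
  obtain ⟨R, hR1, hR2⟩ := ((eventually_ge_atTop (1:ℝ)).and hev).exists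
  have := main R hR1
  linarith
end

section
/- Let N ≥ 1, let E : ℝ^N → (0, ∞) be a smooth positive function, and let τ ∈ ℝ. Then for every smooth compactly supported function φ : ℝ^N → ℝ, one has (τ − 1/2)² ∫_{ℝ^N} E^{2τ−2} |∇E|² φ² dx + (1/2 − τ) ∫_{ℝ^N} (−ΔE) E^{2τ−1} φ² dx ≤ ∫_{ℝ^N} E^{2τ} |∇φ|² dx. -/
open MeasureTheory Filter Real
open scoped RealInnerProductSpace

noncomputable def lap {N : ℕ} (E : EuclideanSpace ℝ (Fin N) → ℝ)
    (x : EuclideanSpace ℝ (Fin N)) : ℝ :=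
  vdiv (gradient E) x

section Aux

variable {N : ℕ}

lemma aux_contDiff_gradient {E : EuclideanSpace ℝ (Fin N) → ℝ} (hE : ContDiff ℝ (⊤ : ℕ∞) E) :
    ContDiff ℝ (⊤ : ℕ∞) (gradient E) := by
  have h1 : ContDiff ℝ (⊤ : ℕ∞) (fun x => fderiv ℝ E x) := hE.fderiv_right le_rfl
  exact (InnerProductSpace.toDual ℝ (EuclideanSpace ℝ (Fin N))).symm.contDiff.comp h1

lemma aux_hcs_gradient {φ : EuclideanSpace ℝ (Fin N) → ℝ} (hφc : HasCompactSupport φ) :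
    HasCompactSupport (gradient φ) := by
  have h := (hφc.fderiv (𝕜 := ℝ)).comp_left
    (g := fun L : EuclideanSpace ℝ (Fin N) →L[ℝ] ℝ =>
      (InnerProductSpace.toDual ℝ (EuclideanSpace ℝ (Fin N))).symm L) (map_zero _)
  exact h

lemma aux_grad_coord {E : EuclideanSpace ℝ (Fin N) → ℝ} (x : EuclideanSpace ℝ (Fin N))
    (i : Fin N) :
    gradient E x i = fderiv ℝ E x (EuclideanSpace.single i 1) := by
  have : ⟪gradient E x, EuclideanSpace.single i 1⟫ = fderiv ℝ E x (EuclideanSpace.single i 1) := by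
    simp [gradient, InnerProductSpace.toDual_symm_apply]
  rw [← this, EuclideanSpace.inner_single_right]; simp

lemma aux_inner_gradient (f : EuclideanSpace ℝ (Fin N) → ℝ) (x v : EuclideanSpace ℝ (Fin N)) :
    ⟪gradient f x, v⟫ = fderiv ℝ f x v := by
  simp [gradient, InnerProductSpace.toDual_symm_apply]

lemma aux_lap_eq {E : EuclideanSpace ℝ (Fin N) → ℝ} (hE : ContDiff ℝ (⊤ : ℕ∞) E)
    (x : EuclideanSpace ℝ (Fin N)) :
    lap E x = ∑ i, fderiv ℝ (fun y => fderiv ℝ E y (EuclideanSpace.single i 1)) x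
      (EuclideanSpace.single i 1) := by
  have hg := aux_contDiff_gradient hE
  have htr : lap E x = ∑ i, (fderiv ℝ (gradient E) x (EuclideanSpace.single i 1)) i := by
    rw [lap, vdiv, LinearMap.trace_eq_matrix_trace ℝ (EuclideanSpace.basisFun (Fin N) ℝ).toBasis,
      Matrix.trace]
    simp [LinearMap.toMatrix_apply, Matrix.diag]
  rw [htr]
  refine Finset.sum_congr rfl fun i _ => ?_
  have hcomp : (fun y => fderiv ℝ E y (EuclideanSpace.single i 1))
      = fun y => (EuclideanSpace.proj i : EuclideanSpace ℝ (Fin N) →L[ℝ] ℝ) (gradient E y) := by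
    ext y; simp [aux_grad_coord]
  rw [hcomp]
  have hd : DifferentiableAt ℝ (gradient E) x := (hg.differentiable (by simp)).differentiableAt
  have := ((EuclideanSpace.proj i : EuclideanSpace ℝ (Fin N) →L[ℝ] ℝ).hasFDerivAt.comp x
    hd.hasFDerivAt).fderiv
  rw [show (fun y => (EuclideanSpace.proj i : EuclideanSpace ℝ (Fin N) →L[ℝ] ℝ) (gradient E y))
      = (EuclideanSpace.proj i : EuclideanSpace ℝ (Fin N) →L[ℝ] ℝ) ∘ gradient E from rfl, this]
  simp

lemma aux_hcs_fderiv_apply {g : EuclideanSpace ℝ (Fin N) → ℝ} (hgc : HasCompactSupport g)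
    (v : EuclideanSpace ℝ (Fin N)) :
    HasCompactSupport (fun x => fderiv ℝ g x v) := by
  have h := hgc.fderiv (𝕜 := ℝ)
  exact h.comp_left (g := fun A : EuclideanSpace ℝ (Fin N) →L[ℝ] ℝ => A v) rfl

lemma aux_cont_fderiv_apply {f : EuclideanSpace ℝ (Fin N) → ℝ} (hf : ContDiff ℝ (⊤ : ℕ∞) f)
    (v : EuclideanSpace ℝ (Fin N)) :
    Continuous (fun x => fderiv ℝ f x v) :=
  (hf.fderiv_right (m := (⊤ : ℕ∞)) (by simp)).continuous.clm_apply continuous_const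

lemma aux_contDiff_fderiv_apply {f : EuclideanSpace ℝ (Fin N) → ℝ} (hf : ContDiff ℝ (⊤ : ℕ∞) f)
    (v : EuclideanSpace ℝ (Fin N)) :
    ContDiff ℝ (⊤ : ℕ∞) (fun x => fderiv ℝ f x v) :=
  (hf.fderiv_right (m := (⊤ : ℕ∞)) (by simp)).clm_apply contDiff_const

lemma aux_ibp_dir {f g : EuclideanSpace ℝ (Fin N) → ℝ} (hf : ContDiff ℝ (⊤ : ℕ∞) f)
    (hg : ContDiff ℝ (⊤ : ℕ∞) g) (hgc : HasCompactSupport g) (v : EuclideanSpace ℝ (Fin N)) :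
    ∫ x, fderiv ℝ f x v * g x = - ∫ x, f x * fderiv ℝ g x v := by
  have h1 : Integrable (fun x => fderiv ℝ f x v * g x) :=
    ((aux_cont_fderiv_apply hf v).mul hg.continuous).integrable_of_hasCompactSupport
      (hgc.mul_left)
  have h2 : Integrable (fun x => f x * fderiv ℝ g x v) :=
    (hf.continuous.mul (aux_cont_fderiv_apply hg v)).integrable_of_hasCompactSupport
      ((aux_hcs_fderiv_apply hgc v).mul_left)
  have h3 : Integrable (fun x => f x * g x) :=
    (hf.continuous.mul hg.continuous).integrable_of_hasCompactSupport hgc.mul_left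
  have := integral_mul_fderiv_eq_neg_fderiv_mul_of_integrable (μ := volume) (v := v)
    h1 h2 h3 (fun x _ => hf.differentiable (by simp) x) (fun x _ => hg.differentiable (by simp) x)
  linarith [this]

lemma aux_div_ibp {E ψ : EuclideanSpace ℝ (Fin N) → ℝ} (hE : ContDiff ℝ (⊤ : ℕ∞) E)
    (hψ : ContDiff ℝ (⊤ : ℕ∞) ψ) (hψc : HasCompactSupport ψ) :
    ∫ x, lap E x * ψ x = - ∫ x, ⟪gradient E x, gradient ψ x⟫ := by
  have key : ∀ i : Fin N,
      ∫ x, fderiv ℝ (fun y => fderiv ℝ E y (EuclideanSpace.single i 1)) x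
        (EuclideanSpace.single i 1) * ψ x
      = - ∫ x, fderiv ℝ E x (EuclideanSpace.single i 1)
          * fderiv ℝ ψ x (EuclideanSpace.single i 1) := fun i =>
    aux_ibp_dir (aux_contDiff_fderiv_apply hE _) hψ hψc _
  calc ∫ x, lap E x * ψ x
      = ∫ x, ∑ i, fderiv ℝ (fun y => fderiv ℝ E y (EuclideanSpace.single i 1)) x
          (EuclideanSpace.single i 1) * ψ x := by
        congr 1; ext x; rw [aux_lap_eq hE x, Finset.sum_mul]
    _ = ∑ i, ∫ x, fderiv ℝ (fun y => fderiv ℝ E y (EuclideanSpace.single i 1)) x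
          (EuclideanSpace.single i 1) * ψ x := by
        refine integral_finset_sum _ fun i _ => ?_
        exact ((aux_cont_fderiv_apply (aux_contDiff_fderiv_apply hE _) _).mul
          hψ.continuous).integrable_of_hasCompactSupport hψc.mul_left
    _ = ∑ i, - ∫ x, fderiv ℝ E x (EuclideanSpace.single i 1)
          * fderiv ℝ ψ x (EuclideanSpace.single i 1) := by
        exact Finset.sum_congr rfl fun i _ => key i
    _ = - ∑ i, ∫ x, fderiv ℝ E x (EuclideanSpace.single i 1)
          * fderiv ℝ ψ x (EuclideanSpace.single i 1) := by rw [Finset.sum_neg_distrib]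
    _ = - ∫ x, ∑ i, fderiv ℝ E x (EuclideanSpace.single i 1)
          * fderiv ℝ ψ x (EuclideanSpace.single i 1) := by
        rw [integral_finset_sum _ fun i _ => ?_]
        exact ((aux_cont_fderiv_apply hE _).mul
          (aux_cont_fderiv_apply hψ _)).integrable_of_hasCompactSupport
          (aux_hcs_fderiv_apply hψc _).mul_left
    _ = - ∫ x, ⟪gradient E x, gradient ψ x⟫ := by
        have : (fun x => ∑ i, fderiv ℝ E x (EuclideanSpace.single i 1)
            * fderiv ℝ ψ x (EuclideanSpace.single i 1))
            = fun x => ⟪gradient E x, gradient ψ x⟫ := by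
          funext x
          rw [PiLp.inner_apply]
          simp [aux_grad_coord]
          exact Finset.sum_congr rfl fun i _ => mul_comm _ _
        rw [this]

lemma aux_psi_inner {E φ : EuclideanSpace ℝ (Fin N) → ℝ} (hE : ContDiff ℝ (⊤ : ℕ∞) E)
    (hφ : ContDiff ℝ (⊤ : ℕ∞) φ) (hEpos : ∀ x, 0 < E x) (τ : ℝ) (x : EuclideanSpace ℝ (Fin N)) :
    ⟪gradient E x, gradient (fun y => E y ^ (2*τ-1) * φ y ^ 2) x⟫
      = (2*τ-1) * (E x ^ (2*τ-2) * ‖gradient E x‖^2 * φ x ^ 2)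
        + 2 * (E x ^ (2*τ-1) * φ x * ⟪gradient E x, gradient φ x⟫) := by
  have hdE := (hE.differentiable (by simp) x).hasFDerivAt
  have hdφ := (hφ.differentiable (by simp) x).hasFDerivAt
  have ha : HasFDerivAt (fun y => E y ^ (2*τ-1))
      (((2*τ-1) * E x ^ (2*τ-1-1)) • fderiv ℝ E x) x :=
    hdE.rpow_const (Or.inl (hEpos x).ne')
  have hb : HasFDerivAt (fun y => φ y ^ 2) ((φ x • fderiv ℝ φ x) + (φ x • fderiv ℝ φ x)) x := by
    have := hdφ.mul hdφ
    simpa [pow_two, Pi.mul_def] using this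
  have hψ : HasFDerivAt (fun y => E y ^ (2*τ-1) * φ y ^ 2) _ x := ha.mul hb
  have h1 : ⟪gradient E x, gradient (fun y => E y ^ (2*τ-1) * φ y ^ 2) x⟫
      = fderiv ℝ (fun y => E y ^ (2*τ-1) * φ y ^ 2) x (gradient E x) := by
    rw [real_inner_comm, aux_inner_gradient]
  rw [h1, hψ.fderiv]
  have h2 : fderiv ℝ E x (gradient E x) = ‖gradient E x‖^2 := by
    rw [← aux_inner_gradient, real_inner_self_eq_norm_sq]
  have h3 : fderiv ℝ φ x (gradient E x) = ⟪gradient E x, gradient φ x⟫ := by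
    rw [← aux_inner_gradient, real_inner_comm]
  have he : (2*τ-1-1 : ℝ) = 2*τ-2 := by ring
  simp only [ContinuousLinearMap.add_apply, ContinuousLinearMap.smul_apply, smul_eq_mul,
    h2, h3, he]
  ring

lemma aux_sq_expand {E φ : EuclideanSpace ℝ (Fin N) → ℝ} (hEpos : ∀ x, 0 < E x) (τ : ℝ)
    (x : EuclideanSpace ℝ (Fin N)) :
    ‖E x ^ τ • gradient φ x + ((τ-1/2) * E x ^ (τ-1) * φ x) • gradient E x‖^2
      = E x ^ (2*τ) * ‖gradient φ x‖^2
        + (2*(τ-1/2)) * (E x ^ (2*τ-1) * φ x * ⟪gradient E x, gradient φ x⟫)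
        + (τ-1/2)^2 * (E x ^ (2*τ-2) * ‖gradient E x‖^2 * φ x ^ 2) := by
  have h1 : E x ^ τ * E x ^ τ = E x ^ (2*τ) := by
    rw [← Real.rpow_add (hEpos x)]; ring_nf
  have h2 : E x ^ τ * E x ^ (τ-1) = E x ^ (2*τ-1) := by
    rw [← Real.rpow_add (hEpos x)]; ring_nf
  have h3 : E x ^ (τ-1) * E x ^ (τ-1) = E x ^ (2*τ-2) := by
    rw [← Real.rpow_add (hEpos x)]; ring_nf
  rw [norm_add_sq_real, ← h1, ← h2, ← h3]
  rw [real_inner_smul_left, real_inner_smul_right, norm_smul, norm_smul, real_inner_comm]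
  simp only [mul_pow, sq_abs, Real.norm_eq_abs]
  ring

end Aux

theorem stmt_18 (N : ℕ) (hN : 1 ≤ N)
    (E : EuclideanSpace ℝ (Fin N) → ℝ) (hE : ContDiff ℝ (⊤ : ℕ∞) E) (hEpos : ∀ x, 0 < E x)
    (τ : ℝ)
    (φ : EuclideanSpace ℝ (Fin N) → ℝ) (hφ : ContDiff ℝ (⊤ : ℕ∞) φ) (hφc : HasCompactSupport φ) :
    (τ - 1/2)^2 * (∫ x, E x ^ (2*τ - 2) * ‖gradient E x‖^2 * φ x ^ 2)
      + (1/2 - τ) * (∫ x, (-lap E x) * E x ^ (2*τ - 1) * φ x ^ 2)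
      ≤ ∫ x, E x ^ (2*τ) * ‖gradient φ x‖^2 := by
  set g1 : EuclideanSpace ℝ (Fin N) → ℝ :=
    fun x => E x ^ (2*τ-2) * ‖gradient E x‖^2 * φ x ^ 2 with hg1
  set g2 : EuclideanSpace ℝ (Fin N) → ℝ :=
    fun x => E x ^ (2*τ-1) * φ x * ⟪gradient E x, gradient φ x⟫ with hg2
  set g3 : EuclideanSpace ℝ (Fin N) → ℝ :=
    fun x => E x ^ (2*τ) * ‖gradient φ x‖^2 with hg3
  have hEcont : ∀ c : ℝ, Continuous (fun x => E x ^ c) := fun c =>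
    (hE.rpow_const_of_ne (fun x => (hEpos x).ne')).continuous
  have hgE := (aux_contDiff_gradient hE).continuous
  have hgφ := (aux_contDiff_gradient hφ).continuous
  have hφ2c : HasCompactSupport (fun x => φ x ^ 2) := by
    have := hφc.mul_left (f := φ)
    simpa [pow_two, Pi.mul_def] using this
  have hgradφc := aux_hcs_gradient hφc
  have hngφc : HasCompactSupport (fun x => ‖gradient φ x‖^2) :=
    hgradφc.comp_left (g := fun u => ‖u‖^2) (by simp)
  -- integrability
  have ig1 : Integrable g1 := by
    refine (((hEcont _).mul (hgE.norm.pow 2)).mul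
      (hφ.continuous.pow 2)).integrable_of_hasCompactSupport hφ2c.mul_left
  have ig2 : Integrable g2 := by
    refine (((hEcont _).mul hφ.continuous).mul
      (hgE.inner hgφ)).integrable_of_hasCompactSupport ?_
    exact (hφc.mul_left (f := fun x => E x ^ (2*τ-1))).mul_right
  have ig3 : Integrable g3 := by
    refine ((hEcont _).mul (hgφ.norm.pow 2)).integrable_of_hasCompactSupport hngφc.mul_left
  -- positivity
  have hpos : 0 ≤ (∫ x, g3 x) + (2*(τ-1/2)) * (∫ x, g2 x) + (τ-1/2)^2 * (∫ x, g1 x) := by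
    have h0 : 0 ≤ ∫ x, (g3 x + (2*(τ-1/2)) * g2 x + (τ-1/2)^2 * g1 x) := by
      refine integral_nonneg fun x => ?_
      have := aux_sq_expand (E := E) (φ := φ) hEpos τ x
      simp only [hg1, hg2, hg3]
      rw [← this]
      positivity
    have e1 : ∫ x, (g3 x + (2*(τ-1/2)) * g2 x + (τ-1/2)^2 * g1 x)
        = (∫ x, (g3 x + (2*(τ-1/2)) * g2 x)) + ∫ x, (τ-1/2)^2 * g1 x :=
      integral_add (ig3.add (ig2.const_mul _)) (ig1.const_mul _)
    have e2 : ∫ x, (g3 x + (2*(τ-1/2)) * g2 x) = (∫ x, g3 x) + ∫ x, (2*(τ-1/2)) * g2 x :=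
      integral_add ig3 (ig2.const_mul _)
    have e3 : ∫ x, (2*(τ-1/2)) * g2 x = (2*(τ-1/2)) * ∫ x, g2 x := integral_const_mul _ _
    have e4 : ∫ x, (τ-1/2)^2 * g1 x = (τ-1/2)^2 * ∫ x, g1 x := integral_const_mul _ _
    linarith [h0, e1, e2, e3, e4]
  -- integration by parts
  set ψ : EuclideanSpace ℝ (Fin N) → ℝ := fun y => E y ^ (2*τ-1) * φ y ^ 2 with hψdef
  have hψ : ContDiff ℝ (⊤ : ℕ∞) ψ :=
    (hE.rpow_const_of_ne (fun x => (hEpos x).ne')).mul (hφ.pow 2)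
  have hψc : HasCompactSupport ψ := hφ2c.mul_left
  have hibp := aux_div_ibp hE hψ hψc
  have hinner : ∀ x, ⟪gradient E x, gradient ψ x⟫ = (2*τ-1) * g1 x + 2 * g2 x := fun x =>
    aux_psi_inner hE hφ hEpos τ x
  have hsplit : ∫ x, ⟪gradient E x, gradient ψ x⟫ = (2*τ-1) * (∫ x, g1 x) + 2 * (∫ x, g2 x) := by
    rw [show (fun x => ⟪gradient E x, gradient ψ x⟫)
        = fun x => (2*τ-1) * g1 x + 2 * g2 x from funext hinner]
    have e1 : ∫ x, ((2*τ-1) * g1 x + 2 * g2 x)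
        = (∫ x, (2*τ-1) * g1 x) + ∫ x, 2 * g2 x :=
      integral_add (ig1.const_mul _) (ig2.const_mul _)
    have e3 : ∫ x, (2*τ-1) * g1 x = (2*τ-1) * ∫ x, g1 x := integral_const_mul _ _
    have e4 : ∫ x, (2:ℝ) * g2 x = 2 * ∫ x, g2 x := integral_const_mul _ _
    rw [e1, e3, e4]
  have hJ : ∫ x, (-lap E x) * E x ^ (2*τ-1) * φ x ^ 2
      = (2*τ-1) * (∫ x, g1 x) + 2 * (∫ x, g2 x) := by
    have : (fun x => (-lap E x) * E x ^ (2*τ-1) * φ x ^ 2) = fun x => -(lap E x * ψ x) := by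
      funext x; simp only [hψdef]; ring
    rw [this, integral_neg, hibp, neg_neg, hsplit]
  rw [hJ]
  simp only [hg1, hg2, hg3] at hpos ⊢
  nlinarith [hpos]
end

section
/- Let N ≥ 1 and let t, α ∈ ℝ. Then for every smooth compactly supported function φ : ℝ^N → ℝ, one has ∫_{ℝ^N} (1+|x|²)^{α/2} |∇φ|² dx ≥ (t + α/2)² ∫_{ℝ^N} |x|² (1+|x|²)^{−2+α/2} φ² dx + (t + α/2) ∫_{ℝ^N} (N − 2(t+1) |x|²/(1+|x|²)) (1+|x|²)^{−1+α/2} φ² dx. -/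
open MeasureTheory Filter Real
open scoped RealInnerProductSpace

variable {N : ℕ}


lemma qpos (x : EuclideanSpace ℝ (Fin N)) : (0:ℝ) < 1 + ‖x‖^2 := by positivity

lemma hasFDerivAt_w (c : ℝ) (x : EuclideanSpace ℝ (Fin N)) :
    HasFDerivAt (fun y : EuclideanSpace ℝ (Fin N) => (1 + ‖y‖^2) ^ c)
      ((c * (1 + ‖x‖^2) ^ (c-1)) • ((2:ℝ) • innerSL ℝ x)) x := by
  have h1 : HasFDerivAt (fun y : EuclideanSpace ℝ (Fin N) => 1 + ‖y‖^2) ((2:ℝ) • innerSL ℝ x) x := by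
    simpa [Nat.smul_one_eq_cast, two_smul, ← Nat.cast_smul_eq_nsmul ℝ] using ((hasStrictFDerivAt_norm_sq x).hasFDerivAt.const_add 1)
  exact (Real.hasDerivAt_rpow_const (p := c) (Or.inl (qpos x).ne')).comp_hasFDerivAt x h1

lemma hasFDerivAt_f (c : ℝ) (i : Fin N) (x : EuclideanSpace ℝ (Fin N)) :
    HasFDerivAt (fun y : EuclideanSpace ℝ (Fin N) => (1 + ‖y‖^2) ^ c * y i)
      (((1 + ‖x‖^2) ^ c) • (EuclideanSpace.proj i : EuclideanSpace ℝ (Fin N) →L[ℝ] ℝ)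
        + (x i) • ((c * (1 + ‖x‖^2) ^ (c-1)) • ((2:ℝ) • innerSL ℝ x))) x :=
  (hasFDerivAt_w c x).mul ((EuclideanSpace.proj (𝕜 := ℝ) i).hasFDerivAt)

lemma fderiv_f_eval (c : ℝ) (i : Fin N) (x : EuclideanSpace ℝ (Fin N)) :
    fderiv ℝ (fun y : EuclideanSpace ℝ (Fin N) => (1 + ‖y‖^2) ^ c * y i) x (EuclideanSpace.single i 1)
      = (1 + ‖x‖^2) ^ c + 2 * c * (1 + ‖x‖^2) ^ (c-1) * (x i)^2 := by
  rw [(hasFDerivAt_f c i x).fderiv]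
  simp [EuclideanSpace.inner_single_right, real_inner_comm]
  ring

lemma cont_w (c : ℝ) : Continuous (fun y : EuclideanSpace ℝ (Fin N) => (1 + ‖y‖^2) ^ c) := by
  have : Differentiable ℝ (fun y : EuclideanSpace ℝ (Fin N) => (1 + ‖y‖^2) ^ c) :=
    fun x => (hasFDerivAt_w c x).differentiableAt
  exact this.continuous

lemma integrable_wmul {w f : EuclideanSpace ℝ (Fin N) → ℝ} (hw : Continuous w) (hf : Continuous f)
    (hfc : HasCompactSupport f) : Integrable (fun x => w x * f x) := by
  exact (hw.mul hf).integrable_of_hasCompactSupport (hfc.mul_left)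

variable {φ : EuclideanSpace ℝ (Fin N) → ℝ}

lemma g_cd (hφ : ContDiff ℝ (⊤ : ℕ∞) φ) : ContDiff ℝ (⊤ : ℕ∞) (fun y => φ y ^ 2) := by
  exact hφ.pow 2

lemma g_cs (hφc : HasCompactSupport φ) : HasCompactSupport (fun y => φ y ^ 2) := by
  exact hφc.comp_left (g := fun r : ℝ => r ^ 2) (by simp)

lemma fderiv_g_cont (hφ : ContDiff ℝ (⊤ : ℕ∞) φ) (v : EuclideanSpace ℝ (Fin N)) :
    Continuous (fun x => fderiv ℝ (fun y => φ y ^ 2) x v) := by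
  exact ((g_cd hφ).continuous_fderiv (by simp)).clm_apply continuous_const

lemma fderiv_g_cs (hφc : HasCompactSupport φ) (v : EuclideanSpace ℝ (Fin N)) :
    HasCompactSupport (fun x => fderiv ℝ (fun y => φ y ^ 2) x v) := by
  have h1 : HasCompactSupport (fderiv ℝ (fun y => φ y ^ 2)) := HasCompactSupport.fderiv (𝕜 := ℝ) (g_cs hφc)
  exact h1.comp_left (g := fun L : EuclideanSpace ℝ (Fin N) →L[ℝ] ℝ => L v) (by simp)

lemma cont_f (c : ℝ) (i : Fin N) :
    Continuous (fun x : EuclideanSpace ℝ (Fin N) => (1 + ‖x‖^2) ^ c * x i) := by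
  exact (cont_w c).mul (EuclideanSpace.proj (𝕜 := ℝ) i).continuous

lemma norm_sq_eq_sum (x : EuclideanSpace ℝ (Fin N)) : ‖x‖^2 = ∑ i, (x i)^2 := by
  rw [EuclideanSpace.norm_eq, Real.sq_sqrt (by positivity)]
  simp [sq_abs]

lemma ibp_coord (c : ℝ) (hφ : ContDiff ℝ (⊤ : ℕ∞) φ) (hφc : HasCompactSupport φ) (i : Fin N) :
    ∫ x : EuclideanSpace ℝ (Fin N), ((1 + ‖x‖^2) ^ c * x i) *
        fderiv ℝ (fun y => φ y ^ 2) x (EuclideanSpace.single i 1)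
      = - ∫ x : EuclideanSpace ℝ (Fin N),
          ((1 + ‖x‖^2) ^ c + 2 * c * (1 + ‖x‖^2) ^ (c-1) * (x i)^2) * φ x ^ 2 := by
  have hdf : (fun x : EuclideanSpace ℝ (Fin N) =>
      fderiv ℝ (fun y => (1 + ‖y‖^2) ^ c * y i) x (EuclideanSpace.single i 1))
      = fun x => (1 + ‖x‖^2) ^ c + 2 * c * (1 + ‖x‖^2) ^ (c-1) * (x i)^2 :=
    funext (fderiv_f_eval c i)
  have hcont_df : Continuous (fun x : EuclideanSpace ℝ (Fin N) =>
      fderiv ℝ (fun y => (1 + ‖y‖^2) ^ c * y i) x (EuclideanSpace.single i 1)) := by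
    rw [hdf]
    exact ((cont_w c).add ((continuous_const.mul (cont_w (c-1))).mul
      ((EuclideanSpace.proj (𝕜 := ℝ) i).continuous.pow 2)))
  have h := integral_mul_fderiv_eq_neg_fderiv_mul_of_integrable
    (μ := (volume : Measure (EuclideanSpace ℝ (Fin N))))
    (f := fun x => (1 + ‖x‖^2) ^ c * x i) (g := fun y => φ y ^ 2)
    (v := EuclideanSpace.single i 1)
    (integrable_wmul hcont_df (hφ.continuous.pow 2) (g_cs hφc))
    (integrable_wmul (cont_f c i) (fderiv_g_cont hφ _) (fderiv_g_cs hφc _))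
    (integrable_wmul (cont_f c i) (hφ.continuous.pow 2) (g_cs hφc))
    (fun x _ => (hasFDerivAt_f c i x).differentiableAt)
    (fun x _ => (g_cd hφ).differentiable (by simp) x)
  rw [h]
  simp only [fderiv_f_eval]


lemma sum_single_eq (x : EuclideanSpace ℝ (Fin N)) :
    ∑ i, x i • EuclideanSpace.single i (1:ℝ) = x := by
  have h := (EuclideanSpace.basisFun (Fin N) ℝ).sum_repr x
  simpa [EuclideanSpace.basisFun_apply, EuclideanSpace.basisFun_repr] using h

lemma ibp_sum (c : ℝ) (hφ : ContDiff ℝ (⊤ : ℕ∞) φ) (hφc : HasCompactSupport φ) :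
    ∫ x : EuclideanSpace ℝ (Fin N), (1 + ‖x‖^2) ^ c * fderiv ℝ (fun y => φ y ^ 2) x x
      = - ∫ x : EuclideanSpace ℝ (Fin N),
          ((N : ℝ) * (1 + ‖x‖^2) ^ c + 2 * c * (1 + ‖x‖^2) ^ (c-1) * ‖x‖^2) * φ x ^ 2 := by
  have hL : ∀ x : EuclideanSpace ℝ (Fin N),
      (1 + ‖x‖^2) ^ c * fderiv ℝ (fun y => φ y ^ 2) x x
      = ∑ i, ((1 + ‖x‖^2) ^ c * x i) *
          fderiv ℝ (fun y => φ y ^ 2) x (EuclideanSpace.single i 1) := by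
    intro x
    have h1 : fderiv ℝ (fun y => φ y ^ 2) x x
        = ∑ i, x i * fderiv ℝ (fun y => φ y ^ 2) x (EuclideanSpace.single i 1) := by
      have h2 : ∑ i, x i * fderiv ℝ (fun y => φ y ^ 2) x (EuclideanSpace.single i 1)
          = ∑ i, fderiv ℝ (fun y => φ y ^ 2) x (x i • EuclideanSpace.single i 1) := by
        simp
      rw [h2, ← map_sum, sum_single_eq]
    rw [h1, Finset.mul_sum]
    exact Finset.sum_congr rfl (fun i _ => by ring)
  have hR : ∀ x : EuclideanSpace ℝ (Fin N),
      ((N : ℝ) * (1 + ‖x‖^2) ^ c + 2 * c * (1 + ‖x‖^2) ^ (c-1) * ‖x‖^2) * φ x ^ 2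
      = ∑ i, ((1 + ‖x‖^2) ^ c + 2 * c * (1 + ‖x‖^2) ^ (c-1) * (x i)^2) * φ x ^ 2 := by
    intro x
    have h3 : ∑ i, ((1 + ‖x‖^2) ^ c + 2 * c * (1 + ‖x‖^2) ^ (c-1) * (x i)^2)
        = (N : ℝ) * (1 + ‖x‖^2) ^ c + 2 * c * (1 + ‖x‖^2) ^ (c-1) * ‖x‖^2 := by
      rw [Finset.sum_add_distrib, Finset.sum_const, ← Finset.mul_sum, ← norm_sq_eq_sum]
      simp [nsmul_eq_mul, mul_assoc]
    rw [← Finset.sum_mul, h3]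
  have hwc : ∀ i : Fin N, Continuous (fun x : EuclideanSpace ℝ (Fin N) =>
      (1 + ‖x‖^2) ^ c + 2 * c * (1 + ‖x‖^2) ^ (c-1) * (x i)^2) := fun i => by
    exact (cont_w c).add ((continuous_const.mul (cont_w (c-1))).mul
      ((EuclideanSpace.proj (𝕜 := ℝ) i).continuous.pow 2))
  simp only [hL, hR]
  rw [integral_finset_sum _ (fun i _ => integrable_wmul (cont_f c i) (fderiv_g_cont hφ _)
    (fderiv_g_cs hφc _)),
    integral_finset_sum _ (fun i _ => integrable_wmul (f := fun x => φ x ^ 2) (hwc i)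
      (hφ.continuous.pow 2) (g_cs hφc)),
    ← Finset.sum_neg_distrib]
  exact Finset.sum_congr rfl (fun i _ => ibp_coord c hφ hφc i)


lemma fderiv_g_self (hφ : ContDiff ℝ (⊤ : ℕ∞) φ) (x : EuclideanSpace ℝ (Fin N)) :
    fderiv ℝ (fun y => φ y ^ 2) x x = 2 * φ x * ⟪gradient φ x, x⟫ := by
  have hx : HasFDerivAt φ (fderiv ℝ φ x) x := (hφ.differentiable (by simp) x).hasFDerivAt
  have h2 : HasFDerivAt (fun y => φ y ^ 2) (((2:ℕ) * φ x ^ 1) • fderiv ℝ φ x) x :=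
    (hasDerivAt_pow 2 (φ x)).comp_hasFDerivAt x hx
  rw [h2.fderiv]
  have h3 : ⟪gradient φ x, x⟫ = fderiv ℝ φ x x := InnerProductSpace.toDual_symm_apply
  rw [h3]
  simp only [ContinuousLinearMap.coe_smul', Pi.smul_apply, smul_eq_mul, pow_one,
    Nat.cast_ofNat]
  try ring

lemma key_ineq (lam : ℝ) (α : ℝ) (hφ : ContDiff ℝ (⊤ : ℕ∞) φ) (x : EuclideanSpace ℝ (Fin N)) :
    0 ≤ (1 + ‖x‖^2) ^ (α/2) * ‖gradient φ x‖^2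
      + lam * ((1 + ‖x‖^2) ^ (-1+α/2) * fderiv ℝ (fun y => φ y ^ 2) x x)
      + lam^2 * (‖x‖^2 * (1 + ‖x‖^2) ^ (-2+α/2) * φ x ^ 2) := by
  have hq := qpos x
  set a := gradient φ x with ha
  have hexp : ‖(1 + ‖x‖^2) • a + (lam * φ x) • x‖^2
      = (1 + ‖x‖^2)^2 * ‖a‖^2 + 2 * (1 + ‖x‖^2) * (lam * φ x) * ⟪a, x⟫
        + (lam * φ x)^2 * ‖x‖^2 := by
    rw [norm_add_sq_real, norm_smul, norm_smul, real_inner_smul_left, real_inner_smul_right]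
    simp only [Real.norm_eq_abs, mul_pow, sq_abs]
    ring
  have e2 : (1 + ‖x‖^2) ^ (α/2) = (1 + ‖x‖^2) ^ (-2+α/2) * (1 + ‖x‖^2)^2 := by
    rw [← Real.rpow_natCast (1 + ‖x‖^2) 2, ← Real.rpow_add hq]
    norm_num
  have e1 : (1 + ‖x‖^2) ^ (-1+α/2) = (1 + ‖x‖^2) ^ (-2+α/2) * (1 + ‖x‖^2) := by
    rw [show (-1+α/2) = (-2+α/2) + 1 by ring, Real.rpow_add hq, Real.rpow_one]
  have hkey : (1 + ‖x‖^2) ^ (α/2) * ‖a‖^2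
      + lam * ((1 + ‖x‖^2) ^ (-1+α/2) * fderiv ℝ (fun y => φ y ^ 2) x x)
      + lam^2 * (‖x‖^2 * (1 + ‖x‖^2) ^ (-2+α/2) * φ x ^ 2)
      = (1 + ‖x‖^2) ^ (-2+α/2) * ‖(1 + ‖x‖^2) • a + (lam * φ x) • x‖^2 := by
    rw [hexp, fderiv_g_self hφ, e1, e2, ← ha]
    ring
  rw [hkey]
  positivity

theorem stmt19_main (N : ℕ) (hN : 1 ≤ N) (t α : ℝ)
    (φ : EuclideanSpace ℝ (Fin N) → ℝ) (hφ : ContDiff ℝ (⊤ : ℕ∞) φ) (hφc : HasCompactSupport φ) :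
    (t + α/2)^2 * (∫ x : EuclideanSpace ℝ (Fin N), ‖x‖^2 * (1 + ‖x‖^2) ^ (-2 + α/2) * φ x ^ 2)
      + (t + α/2) * (∫ x : EuclideanSpace ℝ (Fin N),
          ((N : ℝ) - 2*(t + 1) * ‖x‖^2 / (1 + ‖x‖^2)) * (1 + ‖x‖^2) ^ (-1 + α/2) * φ x ^ 2)
      ≤ ∫ x : EuclideanSpace ℝ (Fin N), (1 + ‖x‖^2) ^ (α/2) * ‖gradient φ x‖^2 := by
  set lam := t + α/2 with hlam
  -- continuity facts
  have hφ2c : Continuous (fun x : EuclideanSpace ℝ (Fin N) => φ x ^ 2) := hφ.continuous.pow 2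
  have hgradc : Continuous (fun x : EuclideanSpace ℝ (Fin N) => gradient φ x) :=
    (InnerProductSpace.toDual ℝ (EuclideanSpace ℝ (Fin N))).symm.continuous.comp
      (hφ.continuous_fderiv (by simp))
  have hgradcs : HasCompactSupport (fun x : EuclideanSpace ℝ (Fin N) => gradient φ x) := by
    have h1 : HasCompactSupport (fderiv ℝ φ) := HasCompactSupport.fderiv (𝕜 := ℝ) hφc
    exact h1.comp_left
      (g := fun L : EuclideanSpace ℝ (Fin N) →L[ℝ] ℝ =>
        (InnerProductSpace.toDual ℝ (EuclideanSpace ℝ (Fin N))).symm L) (by simp)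
  have hDc : Continuous (fun x : EuclideanSpace ℝ (Fin N) => fderiv ℝ (fun y => φ y ^ 2) x x) :=
    ((g_cd hφ).continuous_fderiv (by simp)).clm_apply continuous_id
  have hDcs : HasCompactSupport
      (fun x : EuclideanSpace ℝ (Fin N) => fderiv ℝ (fun y => φ y ^ 2) x x) := by
    have h1 : HasCompactSupport (fderiv ℝ (fun y => φ y ^ 2)) :=
      HasCompactSupport.fderiv (𝕜 := ℝ) (g_cs hφc)
    apply h1.mono
    intro x hx
    simp only [Function.mem_support, ne_eq] at hx ⊢
    intro h0
    exact hx (by rw [h0]; simp)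
  -- integrability
  have intH : Integrable (fun x : EuclideanSpace ℝ (Fin N) =>
      ‖x‖^2 * (1 + ‖x‖^2) ^ (-2 + α/2) * φ x ^ 2) :=
    integrable_wmul (((continuous_norm.pow 2)).mul (cont_w _)) hφ2c (g_cs hφc)
  have intT : Integrable (fun x : EuclideanSpace ℝ (Fin N) =>
      (1 + ‖x‖^2) ^ (-1 + α/2) * φ x ^ 2) :=
    integrable_wmul (cont_w _) hφ2c (g_cs hφc)
  have intG : Integrable (fun x : EuclideanSpace ℝ (Fin N) =>
      (1 + ‖x‖^2) ^ (-1 + α/2) * fderiv ℝ (fun y => φ y ^ 2) x x) :=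
    integrable_wmul (cont_w _) hDc hDcs
  have intF : Integrable (fun x : EuclideanSpace ℝ (Fin N) =>
      (1 + ‖x‖^2) ^ (α/2) * ‖gradient φ x‖^2) := by
    refine integrable_wmul (cont_w _) (hgradc.norm.pow 2) ?_
    exact (hgradcs.comp_left (g := fun v : EuclideanSpace ℝ (Fin N) => ‖v‖^2) (by simp))
  have intK : Integrable (fun x : EuclideanSpace ℝ (Fin N) =>
      ((N : ℝ) - 2*(t + 1) * ‖x‖^2 / (1 + ‖x‖^2)) * (1 + ‖x‖^2) ^ (-1 + α/2) * φ x ^ 2) := by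
    refine integrable_wmul ?_ hφ2c (g_cs hφc)
    refine Continuous.mul ?_ (cont_w _)
    refine continuous_const.sub ?_
    exact (continuous_const.mul (continuous_norm.pow 2)).div
      (continuous_const.add (continuous_norm.pow 2)) (fun x => (qpos x).ne')
  -- IBP identity
  have hIBP := ibp_sum (φ := φ) (-1 + α/2) hφ hφc
  rw [show (-1 + α/2) - 1 = -2 + α/2 by ring] at hIBP
  have hGsplit : ∫ x : EuclideanSpace ℝ (Fin N),
        ((N : ℝ) * (1 + ‖x‖^2) ^ (-1 + α/2)
          + 2 * (-1 + α/2) * (1 + ‖x‖^2) ^ (-2 + α/2) * ‖x‖^2) * φ x ^ 2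
      = (N : ℝ) * (∫ x : EuclideanSpace ℝ (Fin N), (1 + ‖x‖^2) ^ (-1 + α/2) * φ x ^ 2)
        + (α - 2) * (∫ x : EuclideanSpace ℝ (Fin N),
            ‖x‖^2 * (1 + ‖x‖^2) ^ (-2 + α/2) * φ x ^ 2) := by
    rw [← integral_const_mul, ← integral_const_mul, ← integral_add (intT.const_mul _)
      (intH.const_mul _)]
    congr 1; ext x; ring
  -- K split
  have hKsplit : ∫ x : EuclideanSpace ℝ (Fin N),
        ((N : ℝ) - 2*(t + 1) * ‖x‖^2 / (1 + ‖x‖^2)) * (1 + ‖x‖^2) ^ (-1 + α/2) * φ x ^ 2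
      = (N : ℝ) * (∫ x : EuclideanSpace ℝ (Fin N), (1 + ‖x‖^2) ^ (-1 + α/2) * φ x ^ 2)
        - 2 * (t + 1) * (∫ x : EuclideanSpace ℝ (Fin N),
            ‖x‖^2 * (1 + ‖x‖^2) ^ (-2 + α/2) * φ x ^ 2) := by
    rw [← integral_const_mul, ← integral_const_mul, ← integral_sub (intT.const_mul _)
      (intH.const_mul _)]
    congr 1; ext x
    have hq := qpos x
    have e1 : (1 + ‖x‖^2) ^ (-1+α/2) = (1 + ‖x‖^2) ^ (-2+α/2) * (1 + ‖x‖^2) := by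
      rw [show (-1+α/2) = (-2+α/2) + 1 by ring, Real.rpow_add hq, Real.rpow_one]
    rw [e1]
    have hne : (1 + ‖x‖^2) ≠ 0 := hq.ne'
    field_simp
  -- nonnegativity of square integral
  have hsum : 0 ≤ (∫ x : EuclideanSpace ℝ (Fin N), (1 + ‖x‖^2) ^ (α/2) * ‖gradient φ x‖^2)
      + lam * (∫ x : EuclideanSpace ℝ (Fin N),
          (1 + ‖x‖^2) ^ (-1 + α/2) * fderiv ℝ (fun y => φ y ^ 2) x x)
      + lam^2 * (∫ x : EuclideanSpace ℝ (Fin N),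
          ‖x‖^2 * (1 + ‖x‖^2) ^ (-2 + α/2) * φ x ^ 2) := by
    have h0 : 0 ≤ ∫ x : EuclideanSpace ℝ (Fin N),
        ((1 + ‖x‖^2) ^ (α/2) * ‖gradient φ x‖^2
          + lam * ((1 + ‖x‖^2) ^ (-1 + α/2) * fderiv ℝ (fun y => φ y ^ 2) x x)
          + lam^2 * (‖x‖^2 * (1 + ‖x‖^2) ^ (-2 + α/2) * φ x ^ 2)) :=
      integral_nonneg (fun x => key_ineq lam α hφ x)
    have e2 := integral_add (μ := volume)
      (f := fun x : EuclideanSpace ℝ (Fin N) => (1 + ‖x‖^2) ^ (α/2) * ‖gradient φ x‖^2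
        + lam * ((1 + ‖x‖^2) ^ (-1 + α/2) * fderiv ℝ (fun y => φ y ^ 2) x x))
      (g := fun x : EuclideanSpace ℝ (Fin N) =>
        lam^2 * (‖x‖^2 * (1 + ‖x‖^2) ^ (-2 + α/2) * φ x ^ 2))
      (intF.add (intG.const_mul lam)) (intH.const_mul (lam^2))
    have e1 := integral_add (μ := volume)
      (f := fun x : EuclideanSpace ℝ (Fin N) => (1 + ‖x‖^2) ^ (α/2) * ‖gradient φ x‖^2)
      (g := fun x : EuclideanSpace ℝ (Fin N) =>
        lam * ((1 + ‖x‖^2) ^ (-1 + α/2) * fderiv ℝ (fun y => φ y ^ 2) x x))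
      intF (intG.const_mul lam)
    rw [e2, e1, integral_const_mul, integral_const_mul] at h0
    exact h0
  -- final algebra
  set IH := ∫ x : EuclideanSpace ℝ (Fin N), ‖x‖^2 * (1 + ‖x‖^2) ^ (-2 + α/2) * φ x ^ 2
  set IT := ∫ x : EuclideanSpace ℝ (Fin N), (1 + ‖x‖^2) ^ (-1 + α/2) * φ x ^ 2
  set IG := ∫ x : EuclideanSpace ℝ (Fin N),
      (1 + ‖x‖^2) ^ (-1 + α/2) * fderiv ℝ (fun y => φ y ^ 2) x x
  set IF := ∫ x : EuclideanSpace ℝ (Fin N), (1 + ‖x‖^2) ^ (α/2) * ‖gradient φ x‖^2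
  rw [hKsplit]
  have hG : IG = -((N : ℝ) * IT + (α - 2) * IH) := by rw [hIBP, hGsplit]
  have heq : lam^2 * IH + lam * ((N : ℝ) * IT - 2 * (t + 1) * IH)
      = -(lam * IG) - lam^2 * IH := by
    rw [hG, hlam]
    ring
  linarith [hsum, heq]

theorem stmt_19 (N : ℕ) (hN : 1 ≤ N) (t α : ℝ)
    (φ : EuclideanSpace ℝ (Fin N) → ℝ) (hφ : ContDiff ℝ (⊤ : ℕ∞) φ) (hφc : HasCompactSupport φ) :
    (t + α/2)^2 * (∫ x : EuclideanSpace ℝ (Fin N), ‖x‖^2 * (1 + ‖x‖^2) ^ (-2 + α/2) * φ x ^ 2)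
      + (t + α/2) * (∫ x : EuclideanSpace ℝ (Fin N),
          ((N : ℝ) - 2*(t + 1) * ‖x‖^2 / (1 + ‖x‖^2)) * (1 + ‖x‖^2) ^ (-1 + α/2) * φ x ^ 2)
      ≤ ∫ x : EuclideanSpace ℝ (Fin N), (1 + ‖x‖^2) ^ (α/2) * ‖gradient φ x‖^2 := by
  exact stmt19_main N hN t α φ hφ hφc
end
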